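/- arXiv:2504.12391 — 6 statements merged into one kernel-verified Lean document; each statement's English description precedes it below -/
import Mathlib

section
/- Let 𝔞 be a finite-dimensional real inner product space, V ⊆ so(𝔞) a subspace with 𝔞 V-irreducible, and let 𝒞(V) ⊆ so(𝔞) be the centralizer of V in so(𝔞). Then 𝒞(V) ⊕ ℝ·id, viewed inside End(𝔞), is a real associative division algebra; in particular dim 𝒞(V) ∈ {0, 1, 3}. -/
set_option maxHeartbeats 1600000


/-- Let `V ⊆ so(𝔞)` with `𝔞` `V`-irreducible and let `C` be the centralizer of `V` in
`so(𝔞)`.  Then `C ⊕ ℝ·id`, viewed inside `End(𝔞)`, is an associative division algebra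
(it is closed under multiplication and every nonzero element is invertible); in
particular `dim C ∈ {0, 1, 3}`. -/
theorem stmt5 {E : Type*} [NormedAddCommGroup E] [InnerProductSpace ℝ E]
    [FiniteDimensional ℝ E]
    (V : Set (Module.End ℝ E))
    (hskew : ∀ J ∈ V, ∀ x y : E, (inner ℝ (J x) y : ℝ) = - inner ℝ x (J y))
    (hirr : ∀ L : Submodule ℝ E, (∀ J ∈ V, ∀ x ∈ L, J x ∈ L) → L = ⊥ ∨ L = ⊤)
    (C : Submodule ℝ (Module.End ℝ E))
    (hC : ∀ A : Module.End ℝ E,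
      A ∈ C ↔ ((∀ x y : E, (inner ℝ (A x) y : ℝ) = - inner ℝ x (A y)) ∧ ∀ J ∈ V, A * J = J * A)) :
    (∀ A ∈ C ⊔ Submodule.span ℝ {(1 : Module.End ℝ E)}, A ≠ 0 → IsUnit A) ∧
    (∀ A B : Module.End ℝ E, A ∈ C ⊔ Submodule.span ℝ {(1 : Module.End ℝ E)} →
      B ∈ C ⊔ Submodule.span ℝ {(1 : Module.End ℝ E)} →
      A * B ∈ C ⊔ Submodule.span ℝ {(1 : Module.End ℝ E)}) ∧
    Module.finrank ℝ C ∈ ({0, 1, 3} : Set ℕ) := by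
  classical
  set D : Submodule ℝ (Module.End ℝ E) :=
    C ⊔ Submodule.span ℝ {(1 : Module.End ℝ E)} with hDdef
  -- decomposition of elements of D
  have hmemD : ∀ A : Module.End ℝ E, A ∈ D → ∃ S, S ∈ C ∧ ∃ a : ℝ, A = S + a • 1 := by
    intro A hA
    rcases Submodule.mem_sup.mp hA with ⟨S, hS, B, hB, rfl⟩
    rcases Submodule.mem_span_singleton.mp hB with ⟨a, rfl⟩
    exact ⟨S, hS, a, rfl⟩
  -- elements of D commute with V
  have hcommD : ∀ A ∈ D, ∀ J ∈ V, A * J = J * A := by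
    intro A hA J hJ
    obtain ⟨S, hS, a, rfl⟩ := hmemD A hA
    have h := ((hC S).mp hS).2 J hJ
    simp [add_mul, mul_add, smul_mul_assoc, mul_smul_comm, h]
  -- anything commuting with V and nonzero is a unit
  have hunit : ∀ A : Module.End ℝ E, (∀ J ∈ V, A * J = J * A) → A ≠ 0 → IsUnit A := by
    intro A hcomm hA0
    have hinvar : ∀ J ∈ V, ∀ x ∈ LinearMap.ker A, J x ∈ LinearMap.ker A := by
      intro J hJ x hx
      have hx' : A x = 0 := hx
      have hA : A (J x) = J (A x) := by
        have := congrArg (fun f : Module.End ℝ E => f x) (hcomm J hJ)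
        simpa [Module.End.mul_apply] using this
      simp [LinearMap.mem_ker, hA, hx']
    rcases hirr _ hinvar with hbot | htop
    · have hinj : Function.Injective A := by
        rw [← LinearMap.ker_eq_bot]; exact hbot
      exact (Module.End.isUnit_iff A).mpr ⟨hinj, (LinearMap.injective_iff_surjective).mp hinj⟩
    · exact absurd (LinearMap.ker_eq_top.mp htop) hA0
  have hunitD : ∀ A ∈ D, A ≠ 0 → IsUnit A := fun A hA h0 => hunit A (hcommD A hA) h0
  by_cases hE : Subsingleton E
  · -- trivial space
    haveI : Subsingleton (Module.End ℝ E) := by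
      constructor; intro a b; ext x; exact Subsingleton.elim _ _
    refine ⟨hunitD, ?_, ?_⟩
    · intro A B hA hB
      have : A * B = 0 := Subsingleton.elim _ _
      rw [this]; exact Submodule.zero_mem _
    · have h0 : Module.finrank ℝ C = 0 := Module.finrank_zero_of_subsingleton
      simp [h0]
  · haveI : Nontrivial E := not_subsingleton_iff_nontrivial.mp hE
    -- symmetric operators commuting with V are scalar
    have hscal : ∀ P : Module.End ℝ E, (∀ x y : E, (inner ℝ (P x) y : ℝ) = inner ℝ x (P y)) →
        (∀ J ∈ V, P * J = J * P) → ∃ c : ℝ, P = c • 1 := by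
      intro P hsymm hcomm
      have hPs : P.IsSymmetric := hsymm
      obtain ⟨μ, hμ⟩ : ∃ μ : ℝ, P.HasEigenvalue μ :=
        ⟨_, hPs.hasEigenvalue_iSup_of_finiteDimensional⟩
      obtain ⟨x, hx1, hx0⟩ := hμ.exists_hasEigenvector
      have hinvar : ∀ J ∈ V, ∀ z ∈ Module.End.eigenspace P μ, J z ∈ Module.End.eigenspace P μ := by
        intro J hJ z hz
        rw [Module.End.mem_eigenspace_iff] at hz ⊢
        have hPJ : P (J z) = J (P z) := by
          have := congrArg (fun f : Module.End ℝ E => f z) (hcomm J hJ)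
          simpa [Module.End.mul_apply] using this
        rw [hPJ, hz, map_smul]
      rcases hirr _ hinvar with hbot | htop
      · exact absurd ((Submodule.eq_bot_iff _).mp hbot x hx1) hx0
      · refine ⟨μ, ?_⟩
        ext z
        have hz : z ∈ Module.End.eigenspace P μ := htop ▸ Submodule.mem_top
        rw [Module.End.mem_eigenspace_iff] at hz
        simpa using hz
    -- the anticommutator of two elements of C is scalar
    have hsym2 : ∀ S ∈ C, ∀ T ∈ C, ∃ c : ℝ, S * T + T * S = c • 1 := by
      intro S hS T hT
      obtain ⟨hSsk, hScm⟩ := (hC S).mp hS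
      obtain ⟨hTsk, hTcm⟩ := (hC T).mp hT
      apply hscal
      · intro x y
        simp only [LinearMap.add_apply, Module.End.mul_apply, inner_add_left, inner_add_right]
        linarith [hSsk (T x) y, hTsk (S x) y, hSsk x (T y), hTsk x (S y),
          hSsk (T y) x, hTsk (S y) x, real_inner_comm (S (T x)) y,
          real_inner_comm (T (S x)) y, real_inner_comm x (S (T y)),
          real_inner_comm x (T (S y)), real_inner_comm (T x) (S y),
          real_inner_comm (S x) (T y)]
      · intro J hJ
        have h1 := hScm J hJ
        have h2 := hTcm J hJ
        calc (S * T + T * S) * J = S * (T * J) + T * (S * J) := by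
              simp [add_mul, mul_assoc]
          _ = S * (J * T) + T * (J * S) := by rw [h2, h1]
          _ = (S * J) * T + (T * J) * S := by simp [mul_assoc]
          _ = (J * S) * T + (J * T) * S := by rw [h1, h2]
          _ = J * (S * T + T * S) := by simp [mul_add, mul_assoc]
    -- the commutator of two elements of C lies in C
    have hcomm2 : ∀ S ∈ C, ∀ T ∈ C, S * T - T * S ∈ C := by
      intro S hS T hT
      obtain ⟨hSsk, hScm⟩ := (hC S).mp hS
      obtain ⟨hTsk, hTcm⟩ := (hC T).mp hT
      rw [hC]
      constructor
      · intro x y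
        simp only [LinearMap.sub_apply, Module.End.mul_apply, inner_sub_left, inner_sub_right]
        linarith [hSsk (T x) y, hTsk (S x) y, hSsk x (T y), hTsk x (S y),
          real_inner_comm (T x) (S y), real_inner_comm (S x) (T y)]
      · intro J hJ
        have h1 := hScm J hJ
        have h2 := hTcm J hJ
        calc (S * T - T * S) * J = S * (T * J) - T * (S * J) := by
              simp [sub_mul, mul_assoc]
          _ = S * (J * T) - T * (J * S) := by rw [h2, h1]
          _ = (S * J) * T - (T * J) * S := by simp [mul_assoc]
          _ = (J * S) * T - (J * T) * S := by rw [h1, h2]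
          _ = J * (S * T - T * S) := by simp [mul_sub, mul_assoc]
    -- products of elements of C lie in D
    have hmulC : ∀ S ∈ C, ∀ T ∈ C, S * T ∈ D := by
      intro S hS T hT
      obtain ⟨c, hc⟩ := hsym2 S hS T hT
      apply Submodule.mem_sup.mpr
      refine ⟨(2⁻¹ : ℝ) • (S * T - T * S), Submodule.smul_mem _ _ (hcomm2 S hS T hT),
        (2⁻¹ * c) • 1, Submodule.mem_span_singleton.mpr ⟨2⁻¹ * c, rfl⟩, ?_⟩
      have hTS : T * S = c • (1 : Module.End ℝ E) - S * T := eq_sub_of_add_eq' hc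
      rw [hTS]
      module
    -- closure of D under multiplication
    have hmulD : ∀ A B : Module.End ℝ E, A ∈ D → B ∈ D → A * B ∈ D := by
      intro A B hA hB
      obtain ⟨S, hS, a, rfl⟩ := hmemD A hA
      obtain ⟨T, hT, b, rfl⟩ := hmemD B hB
      have hexp : (S + a • 1) * (T + b • 1)
          = S * T + (b • S + (a • T + (a * b) • (1 : Module.End ℝ E))) := by
        simp only [add_mul, mul_add, smul_mul_assoc, mul_smul_comm, one_mul, mul_one,
          smul_smul, smul_add]
        module
      rw [hexp]
      refine Submodule.add_mem _ (hmulC S hS T hT) (Submodule.add_mem _ ?_ (Submodule.add_mem _ ?_ ?_))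
      · exact Submodule.mem_sup_left (Submodule.smul_mem _ _ hS)
      · exact Submodule.mem_sup_left (Submodule.smul_mem _ _ hT)
      · exact Submodule.mem_sup_right (Submodule.mem_span_singleton.mpr ⟨a * b, rfl⟩)
    refine ⟨hunitD, hmulD, ?_⟩
    -- squares of nonzero elements of C are negative scalars
    have hsq : ∀ S ∈ C, S ≠ 0 → ∃ s : ℝ, 0 < s ∧ S * S = (-s) • 1 := by
      intro S hS hS0
      obtain ⟨hSsk, hScm⟩ := (hC S).mp hS
      obtain ⟨c, hc⟩ : ∃ c : ℝ, S * S = c • 1 := by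
        apply hscal
        · intro x y
          simp only [Module.End.mul_apply]
          linarith [hSsk (S x) y, hSsk x (S y), real_inner_comm (S x) (S y)]
        · intro J hJ
          have h1 := hScm J hJ
          calc S * S * J = S * (J * S) := by rw [mul_assoc, h1]
            _ = J * (S * S) := by rw [← mul_assoc, h1, mul_assoc]
      obtain ⟨x, hx0⟩ : ∃ x : E, x ≠ 0 := exists_ne 0
      have hneg : c * ‖x‖ ^ 2 ≤ 0 := by
        have h1 : (inner ℝ ((S * S) x) x : ℝ) = c * ‖x‖ ^ 2 := by
          rw [hc]
          simp [real_inner_smul_left, real_inner_self_eq_norm_sq]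
        have h2 : (inner ℝ ((S * S) x) x : ℝ) = - ‖S x‖ ^ 2 := by
          simp only [Module.End.mul_apply]
          rw [hSsk (S x) x]
          simp [real_inner_self_eq_norm_sq]
        nlinarith [norm_nonneg (S x)]
      have hcle : c ≤ 0 := by
        have hx2 : 0 < ‖x‖ ^ 2 := pow_pos (norm_pos_iff.mpr hx0) 2
        nlinarith
      have hcne : c ≠ 0 := by
        intro h0
        rw [h0, zero_smul] at hc
        have hU : IsUnit (S * S) := (hunit S hScm hS0).mul (hunit S hScm hS0)
        rw [hc] at hU
        exact not_isUnit_zero hU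
      exact ⟨-c, by cases' lt_or_eq_of_le hcle with h h; linarith; exact absurd h hcne, by
        rw [neg_neg]; exact hc⟩
    -- products of anticommuting elements of C lie in C
    have hmulCC : ∀ S ∈ C, ∀ T ∈ C, S * T + T * S = 0 → S * T ∈ C := by
      intro S hS T hT hanti
      obtain ⟨hSsk, hScm⟩ := (hC S).mp hS
      obtain ⟨hTsk, hTcm⟩ := (hC T).mp hT
      have hTS : T * S = -(S * T) := eq_neg_of_add_eq_zero_right hanti
      rw [hC]
      constructor
      · intro x y
        have h1 : (inner ℝ ((S * T) x) y : ℝ) = inner ℝ x ((T * S) y) := by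
          simp only [Module.End.mul_apply]
          linarith [hSsk (T x) y, hTsk x (S y), real_inner_comm (T x) (S y)]
        rw [h1, hTS]
        simp
      · intro J hJ
        have h1 := hScm J hJ
        have h2 := hTcm J hJ
        calc S * T * J = S * (J * T) := by rw [mul_assoc, h2]
          _ = (J * S) * T := by rw [← mul_assoc, h1]
          _ = J * (S * T) := by rw [mul_assoc]
    -- scalar cancellation
    have hone : (1 : Module.End ℝ E) ≠ 0 := one_ne_zero
    have hcancel : ∀ a : ℝ, a • (1 : Module.End ℝ E) = 0 → a = 0 := by
      intro a ha
      rcases smul_eq_zero.mp ha with h | h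
      · exact h
      · exact absurd h hone
    -- now the dimension count
    by_cases hfr : Module.finrank ℝ C ≤ 1
    · interval_cases h : Module.finrank ℝ C <;> simp
    · -- dim ≥ 2 : produce a quaternionic triple
      push_neg at hfr
      -- find S ∈ C nonzero and T ∈ C not in span {S}
      obtain ⟨S, hS, hS0⟩ : ∃ S, S ∈ C ∧ S ≠ 0 := by
        by_contra h
        push_neg at h
        have : C = ⊥ := by
          rw [Submodule.eq_bot_iff]
          intro x hx
          by_contra hx0
          exact hx0 (by_contra fun h' => h' (h x hx))
        rw [this] at hfr
        simp at hfr
      obtain ⟨T, hT, hTsp⟩ : ∃ T, T ∈ C ∧ T ∉ Submodule.span ℝ {S} := by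
        by_contra h
        push_neg at h
        have hle : C ≤ Submodule.span ℝ {S} := fun x hx => h x hx
        have := Submodule.finrank_mono hle
        have h1 : Module.finrank ℝ (Submodule.span ℝ {S}) = 1 :=
          finrank_span_singleton hS0
        omega
      -- normalization: square roots of -1 in C
      have hnormalize : ∀ X, X ∈ C → X ≠ 0 →
          ∃ Y, Y ∈ C ∧ Y * Y = -1 ∧ ∃ t : ℝ, Y = t • X := by
        intro X hX hX0
        obtain ⟨u, hu, hXX⟩ := hsq X hX hX0
        refine ⟨(Real.sqrt u)⁻¹ • X, Submodule.smul_mem _ _ hX, ?_, (Real.sqrt u)⁻¹, rfl⟩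
        rw [smul_mul_smul_comm, hXX, smul_smul]
        have h1 : (Real.sqrt u)⁻¹ * (Real.sqrt u)⁻¹ * -u = -1 := by
          rw [← mul_inv, Real.mul_self_sqrt hu.le]
          field_simp
        rw [h1, neg_smul, one_smul]
      obtain ⟨I, hIC, hI2, rI, hIS⟩ := hnormalize S hS hS0
      -- build J anticommuting with I
      obtain ⟨c, hc⟩ := hsym2 I hIC T hT
      set T' : Module.End ℝ E := T + (2⁻¹ * c) • I with hT'def
      have hT'C : T' ∈ C := Submodule.add_mem _ hT (Submodule.smul_mem _ _ hIC)
      have hT'0 : T' ≠ 0 := by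
        intro h0
        apply hTsp
        have hTeq : T = -((2⁻¹ * c) • I) := eq_neg_of_add_eq_zero_left h0
        rw [hTeq, hIS]
        exact Submodule.neg_mem _ (Submodule.smul_mem _ _ (Submodule.smul_mem _ _
          (Submodule.mem_span_singleton_self S)))
      have hantiIT' : I * T' + T' * I = 0 := by
        calc I * T' + T' * I
            = (I * T + T * I) + ((2⁻¹ * c) • (I * I) + (2⁻¹ * c) • (I * I)) := by
              rw [hT'def]
              simp only [mul_add, add_mul, mul_smul_comm, smul_mul_assoc, smul_add]
              abel
          _ = c • 1 + ((2⁻¹ * c) • (-1) + (2⁻¹ * c) • (-1)) := by rw [hc, hI2]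
          _ = 0 := by module
      obtain ⟨J, hJC, hJ2, rJ, hJT'⟩ := hnormalize T' hT'C hT'0
      have hIJ : I * J + J * I = 0 := by
        rw [hJT']
        have h1 : I * (rJ • T') + (rJ • T') * I = rJ • (I * T' + T' * I) := by
          simp only [mul_smul_comm, smul_mul_assoc, smul_add]
        rw [h1, hantiIT', smul_zero]
      obtain ⟨K, hKdef⟩ : ∃ K : Module.End ℝ E, K = I * J := ⟨_, rfl⟩
      have hKC : K ∈ C := by rw [hKdef]; exact hmulCC I hIC J hJC hIJ
      have hJI : J * I = -(I * J) := eq_neg_of_add_eq_zero_right hIJ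
      have hK2 : K * K = -1 := by
        calc K * K = I * ((J * I) * J) := by rw [hKdef]; noncomm_ring
          _ = I * ((-(I * J)) * J) := by rw [hJI]
          _ = -((I * I) * (J * J)) := by noncomm_ring
          _ = -((-1 : Module.End ℝ E) * (-1)) := by rw [hI2, hJ2]
          _ = -1 := by noncomm_ring
      have hIK : I * K + K * I = 0 := by
        calc I * K + K * I = I * (I * J) + I * (J * I) := by rw [hKdef]; noncomm_ring
          _ = I * (I * J) + I * (-(I * J)) := by rw [hJI]
          _ = 0 := by noncomm_ring
      have hJK : J * K + K * J = 0 := by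
        calc J * K + K * J = (J * I) * J + I * (J * J) := by rw [hKdef]; noncomm_ring
          _ = (-(I * J)) * J + I * (J * J) := by rw [hJI]
          _ = -(I * (J * J)) + I * (J * J) := by noncomm_ring
          _ = 0 := by abel
      have hJI0 : J * I + I * J = 0 := by rw [add_comm]; exact hIJ
      have hKI0 : K * I + I * K = 0 := by rw [add_comm]; exact hIK
      have hKJ0 : K * J + J * K = 0 := by rw [add_comm]; exact hJK
      -- coefficient extraction
      have extract : ∀ P Q R : Module.End ℝ E, ∀ a b c : ℝ, P * P = -1 →
          P * Q + Q * P = 0 → P * R + R * P = 0 → a • P + b • Q + c • R = 0 → a = 0 := by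
        intro P Q R a b c hP2 hPQ hPR hzero
        have h1 : P * (a • P + b • Q + c • R) + (a • P + b • Q + c • R) * P
            = a • (P * P + P * P) + (b • (P * Q + Q * P) + c • (P * R + R * P)) := by
          simp only [mul_add, add_mul, mul_smul_comm, smul_mul_assoc, smul_add]
          abel
        rw [hzero, hP2, hPQ, hPR] at h1
        have h2 : a • ((-1 : Module.End ℝ E) + -1) + (b • (0 : Module.End ℝ E) + c • 0) = 0 := by
          rw [← h1]; simp
        have h3 : (-(2 * a)) • (1 : Module.End ℝ E) = 0 := by rw [← h2]; module
        have h4 := hcancel _ h3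
        linarith
      -- C is spanned by I, J, K
      have hle1 : C ≤ Submodule.span ℝ {I, J, K} := by
        intro W hW
        obtain ⟨γ1, hγ1⟩ := hsym2 I hIC W hW
        obtain ⟨γ2, hγ2⟩ := hsym2 J hJC W hW
        obtain ⟨γ3, hγ3⟩ := hsym2 K hKC W hW
        set a : ℝ := -(2⁻¹ * γ1) with ha
        set b : ℝ := -(2⁻¹ * γ2) with hb
        set c' : ℝ := -(2⁻¹ * γ3) with hc'
        set W' : Module.End ℝ E := W - (a • I + b • J + c' • K) with hW'def
        have hW'C : W' ∈ C := Submodule.sub_mem _ hW (Submodule.add_mem _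
          (Submodule.add_mem _ (Submodule.smul_mem _ _ hIC) (Submodule.smul_mem _ _ hJC))
          (Submodule.smul_mem _ _ hKC))
        have hW'I : I * W' + W' * I = 0 := by
          calc I * W' + W' * I
              = (I * W + W * I) - (a • (I * I + I * I) + (b • (I * J + J * I)
                  + c' • (I * K + K * I))) := by
                rw [hW'def]
                simp only [mul_sub, sub_mul, mul_add, add_mul, mul_smul_comm,
                  smul_mul_assoc, smul_add]
                abel
            _ = γ1 • 1 - (a • ((-1 : Module.End ℝ E) + -1) + (b • 0 + c' • 0)) := by
                rw [hγ1, hI2, hIJ, hIK]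
            _ = 0 := by rw [ha]; module
        have hW'J : J * W' + W' * J = 0 := by
          calc J * W' + W' * J
              = (J * W + W * J) - (a • (J * I + I * J) + (b • (J * J + J * J)
                  + c' • (J * K + K * J))) := by
                rw [hW'def]
                simp only [mul_sub, sub_mul, mul_add, add_mul, mul_smul_comm,
                  smul_mul_assoc, smul_add]
                abel
            _ = γ2 • 1 - (a • 0 + (b • ((-1 : Module.End ℝ E) + -1) + c' • 0)) := by
                rw [hγ2, hJ2, hJI0, hJK]
            _ = 0 := by rw [hb]; module
        have hW'K : K * W' + W' * K = 0 := by
          calc K * W' + W' * K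
              = (K * W + W * K) - (a • (K * I + I * K) + (b • (K * J + J * K)
                  + c' • (K * K + K * K))) := by
                rw [hW'def]
                simp only [mul_sub, sub_mul, mul_add, add_mul, mul_smul_comm,
                  smul_mul_assoc, smul_add]
                abel
            _ = γ3 • 1 - (a • 0 + (b • 0 + c' • ((-1 : Module.End ℝ E) + -1))) := by
                rw [hγ3, hK2, hKI0, hKJ0]
            _ = 0 := by rw [hc']; module
        have hW'Ineg : W' * I = -(I * W') := eq_neg_of_add_eq_zero_right hW'I
        have hW'Jneg : W' * J = -(J * W') := eq_neg_of_add_eq_zero_right hW'J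
        have hW'Kneg : W' * K = -(K * W') := eq_neg_of_add_eq_zero_right hW'K
        have hWKcomm : W' * K = K * W' := by
          calc W' * K = (W' * I) * J := by rw [hKdef]; noncomm_ring
            _ = (-(I * W')) * J := by rw [hW'Ineg]
            _ = -(I * (W' * J)) := by noncomm_ring
            _ = -(I * (-(J * W'))) := by rw [hW'Jneg]
            _ = (I * J) * W' := by noncomm_ring
            _ = K * W' := by rw [hKdef]
        have hKW0 : K * W' = 0 := by
          have h1 : K * W' + K * W' = 0 := by
            nth_rewrite 2 [← hWKcomm]
            rw [add_comm]
            rw [hW'Kneg]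
            abel
          have h2 : K * W' = (2⁻¹ : ℝ) • (K * W' + K * W') := by module
          rw [h2, h1, smul_zero]
        have hW'0 : W' = 0 := by
          by_contra h0
          have hK0 : K ≠ 0 := by
            intro h
            rw [h, zero_mul] at hK2
            exact hone (by rw [← neg_eq_zero]; exact hK2.symm)
          have hUK : IsUnit K := hunit K ((hC K).mp hKC).2 hK0
          have hUW : IsUnit W' := hunit W' ((hC W').mp hW'C).2 h0
          have : IsUnit (K * W') := hUK.mul hUW
          rw [hKW0] at this
          exact not_isUnit_zero this
        have hWeq : W = a • I + b • J + c' • K := by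
          have := sub_eq_zero.mp hW'0
          rw [this]
        rw [hWeq]
        have hIm : I ∈ ({I, J, K} : Set (Module.End ℝ E)) := by simp
        have hJm : J ∈ ({I, J, K} : Set (Module.End ℝ E)) := by simp
        have hKm : K ∈ ({I, J, K} : Set (Module.End ℝ E)) := by simp
        exact Submodule.add_mem _ (Submodule.add_mem _
          (Submodule.smul_mem _ _ (Submodule.subset_span hIm))
          (Submodule.smul_mem _ _ (Submodule.subset_span hJm)))
          (Submodule.smul_mem _ _ (Submodule.subset_span hKm))
      have hle2 : Submodule.span ℝ {I, J, K} ≤ C := by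
        rw [Submodule.span_le]
        rintro x hx
        simp only [Set.mem_insert_iff, Set.mem_singleton_iff] at hx
        rcases hx with rfl | rfl | rfl
        exacts [hIC, hJC, hKC]
      have hCM : C = Submodule.span ℝ {I, J, K} := le_antisymm hle1 hle2
      -- linear independence of I, J, K
      have hli : LinearIndependent ℝ ![I, J, K] := by
        rw [Fintype.linearIndependent_iff]
        intro g hg
        rw [Fin.sum_univ_three] at hg
        simp only [Matrix.cons_val_zero, Matrix.cons_val_one, Matrix.head_cons,
          Matrix.cons_val_two, Matrix.tail_cons] at hg
        have h0 : g 0 = 0 := extract I J K _ _ _ hI2 hIJ hIK hg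
        have h1 : g 1 = 0 := extract J I K _ _ _ hJ2 hJI0 hJK (by rw [← hg]; abel)
        have h2 : g 2 = 0 := extract K I J _ _ _ hK2 hKI0 hKJ0 (by rw [← hg]; abel)
        intro i
        fin_cases i
        · exact h0
        · exact h1
        · exact h2
      have hrange : Set.range ![I, J, K] = ({I, J, K} : Set (Module.End ℝ E)) := by
        ext x
        constructor
        · rintro ⟨i, rfl⟩
          fin_cases i <;> simp
        · intro hx
          simp only [Set.mem_insert_iff, Set.mem_singleton_iff] at hx
          rcases hx with rfl | rfl | rfl
          exacts [⟨0, rfl⟩, ⟨1, rfl⟩, ⟨2, rfl⟩]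
      have hfin : Module.finrank ℝ C = 3 := by
        rw [hCM, ← hrange, finrank_span_eq_card hli]
        simp
      simp [hfin]
end

section
/- Let 𝔞 = 𝔞₁ ⊕ 𝔞₂ be an orthogonal decomposition of a finite-dimensional real inner product space, and V a space of skew-symmetric endomorphisms preserving both 𝔞₁ and 𝔞₂, with each 𝔞ᵢ irreducible under the restrictions of V. If a nonzero skew-symmetric endomorphism A of 𝔞 of the block-off-diagonal form A = [[0, T], [−Tᵗ, 0]] commutes with every element of V, then dim 𝔞₁ = dim 𝔞₂ and T is a nonzero scalar multiple of an orthogonal map. -/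
open Module

lemma stmt6_schur {E : Type*} [NormedAddCommGroup E] [InnerProductSpace ℝ E]
    [FiniteDimensional ℝ E] {ι : Type*} (W : Set ι) (act : ι → E →ₗ[ℝ] E)
    (hirr : ∀ L : Submodule ℝ E, (∀ p ∈ W, ∀ x ∈ L, act p x ∈ L) → L = ⊥ ∨ L = ⊤)
    (S : E →ₗ[ℝ] E) (hsym : S.IsSymmetric)
    (hcS : ∀ p ∈ W, S ∘ₗ act p = act p ∘ₗ S) :
    ∃ μ : ℝ, ∀ x, S x = μ • x := by
  cases subsingleton_or_nontrivial E with
  | inl h => exact ⟨0, fun x => Subsingleton.elim _ _⟩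
  | inr h =>
    obtain ⟨μ, hμ⟩ : ∃ μ : ℝ, Module.End.HasEigenvalue S μ :=
      ⟨_, hsym.hasEigenvalue_iSup_of_finiteDimensional⟩
    set L := Module.End.eigenspace S μ with hL
    have hinv : ∀ p ∈ W, ∀ x ∈ L, act p x ∈ L := by
      intro p hp x hx
      rw [hL, Module.End.mem_eigenspace_iff] at hx ⊢
      have := congrArg (fun f => f x) (hcS p hp)
      simp only [LinearMap.comp_apply] at this
      rw [this, hx, map_smul]
    rcases hirr L hinv with hbot | htop
    · exact absurd hbot (Module.End.hasEigenvalue_iff.mp hμ)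
    · refine ⟨μ, fun x => ?_⟩
      have : x ∈ L := htop ▸ Submodule.mem_top
      exact Module.End.mem_eigenspace_iff.mp this

/-- Let `𝔞 = 𝔞₁ ⊕ 𝔞₂` with `V` a set of skew-symmetric endomorphisms preserving both
blocks, each block irreducible.  If the nonzero block-off-diagonal skew-symmetric map
`A = [[0, T],[−Tᵗ, 0]]` (encoded by `T : 𝔞₁ → 𝔞₂` together with its adjoint) commutes
with every element of `V`, then `dim 𝔞₁ = dim 𝔞₂` and `T` is a nonzero scalar multiple
of an orthogonal map. -/
theorem stmt6 {E₁ E₂ : Type*}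
    [NormedAddCommGroup E₁] [InnerProductSpace ℝ E₁] [FiniteDimensional ℝ E₁]
    [NormedAddCommGroup E₂] [InnerProductSpace ℝ E₂] [FiniteDimensional ℝ E₂]
    (V : Set ((E₁ →ₗ[ℝ] E₁) × (E₂ →ₗ[ℝ] E₂)))
    (hskew₁ : ∀ p ∈ V, ∀ x y : E₁, (inner ℝ (p.1 x) y : ℝ) = - inner ℝ x (p.1 y))
    (hskew₂ : ∀ p ∈ V, ∀ x y : E₂, (inner ℝ (p.2 x) y : ℝ) = - inner ℝ x (p.2 y))
    (hirr₁ : ∀ L : Submodule ℝ E₁, (∀ p ∈ V, ∀ x ∈ L, p.1 x ∈ L) → L = ⊥ ∨ L = ⊤)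
    (hirr₂ : ∀ L : Submodule ℝ E₂, (∀ p ∈ V, ∀ x ∈ L, p.2 x ∈ L) → L = ⊥ ∨ L = ⊤)
    (T : E₁ →ₗ[ℝ] E₂) (hT : T ≠ 0)
    (hcomm : ∀ p ∈ V, T ∘ₗ p.1 = p.2 ∘ₗ T)
    (hcomm' : ∀ p ∈ V, (LinearMap.adjoint T) ∘ₗ p.2 = p.1 ∘ₗ (LinearMap.adjoint T)) :
    Module.finrank ℝ E₁ = Module.finrank ℝ E₂ ∧
    ∃ c : ℝ, 0 < c ∧ ∀ x : E₁, ‖T x‖ = c * ‖x‖ := by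
  set T' := LinearMap.adjoint T with hT'
  -- S = T† T on E₁
  have hsym₁ : (T' ∘ₗ T).IsSymmetric := by
    intro x y
    simp only [LinearMap.comp_apply, hT', LinearMap.adjoint_inner_left,
      LinearMap.adjoint_inner_right]
  have hsym₂ : (T ∘ₗ T').IsSymmetric := by
    intro x y
    simp only [LinearMap.comp_apply, hT']
    rw [← LinearMap.adjoint_inner_right T, LinearMap.adjoint_inner_left]
  obtain ⟨μ, hμ⟩ := stmt6_schur V (fun p => p.1) hirr₁ (T' ∘ₗ T) hsym₁
    (fun p hp => by
      ext x
      have h1 := congrArg (fun f => T' (f x)) (hcomm p hp)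
      have h2 := congrArg (fun f => f (T x)) (hcomm' p hp)
      simp only [LinearMap.comp_apply] at h1 h2 ⊢
      rw [h1, h2])
  obtain ⟨ν, hν⟩ := stmt6_schur V (fun p => p.2) hirr₂ (T ∘ₗ T') hsym₂
    (fun p hp => by
      ext x
      have h1 := congrArg (fun f => T (f x)) (hcomm' p hp)
      have h2 := congrArg (fun f => f (T' x)) (hcomm p hp)
      simp only [LinearMap.comp_apply] at h1 h2 ⊢
      rw [h1, h2])
  have key : ∀ x : E₁, ‖T x‖ ^ 2 = μ * ‖x‖ ^ 2 := by
    intro x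
    have : (inner ℝ (T x) (T x) : ℝ) = inner ℝ ((T' ∘ₗ T) x) x := by
      simp [hT', LinearMap.adjoint_inner_left]
    rw [hμ x] at this
    simp only [inner_smul_left, RCLike.conj_to_real] at this
    rw [← real_inner_self_eq_norm_sq, ← real_inner_self_eq_norm_sq]
    exact this
  -- μ > 0
  obtain ⟨x₀, hx₀⟩ : ∃ x, T x ≠ 0 := by
    by_contra h
    push_neg at h
    exact hT (LinearMap.ext fun x => by simp [h x])
  have hx₀' : x₀ ≠ 0 := fun h => hx₀ (by simp [h])
  have hμpos : 0 < μ := by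
    have h1 : 0 < ‖T x₀‖ ^ 2 := pow_pos (norm_pos_iff.mpr hx₀) 2
    rw [key x₀] at h1
    have h2 : 0 < ‖x₀‖ ^ 2 := pow_pos (norm_pos_iff.mpr hx₀') 2
    nlinarith
  -- key for T'
  have keyν : ∀ y : E₂, ‖T' y‖ ^ 2 = ν * ‖y‖ ^ 2 := by
    intro y
    have : (inner ℝ (T' y) (T' y) : ℝ) = inner ℝ ((T ∘ₗ T') y) y := by
      simp only [LinearMap.comp_apply, hT', LinearMap.adjoint_inner_left]
      exact real_inner_comm _ _
    rw [hν y] at this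
    simp only [inner_smul_left, RCLike.conj_to_real] at this
    rw [← real_inner_self_eq_norm_sq, ← real_inner_self_eq_norm_sq]
    exact this
  have hνpos : 0 < ν := by
    have hy : T' (T x₀) ≠ 0 := by
      intro h
      have : (inner ℝ (T x₀) (T x₀) : ℝ) = 0 := by
        rw [← LinearMap.adjoint_inner_left, ← hT', h, inner_zero_left]
      exact hx₀ (inner_self_eq_zero.mp this)
    have h1 : 0 < ‖T' (T x₀)‖ ^ 2 := pow_pos (norm_pos_iff.mpr hy) 2
    rw [keyν (T x₀)] at h1
    have h2 : 0 < ‖T x₀‖ ^ 2 := pow_pos (norm_pos_iff.mpr hx₀) 2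
    nlinarith
  have hinjT : Function.Injective T := by
    rw [← LinearMap.ker_eq_bot, LinearMap.ker_eq_bot']
    intro x hx
    have h := key x
    rw [hx, norm_zero] at h
    have hx2 : ‖x‖ ^ 2 = 0 := by nlinarith [hμpos]
    exact norm_eq_zero.mp ((pow_eq_zero_iff (two_ne_zero)).mp hx2)
  have hinjT' : Function.Injective T' := by
    rw [← LinearMap.ker_eq_bot, LinearMap.ker_eq_bot']
    intro y hy
    have h := keyν y
    rw [hy, norm_zero] at h
    have hy2 : ‖y‖ ^ 2 = 0 := by nlinarith [hνpos]
    exact norm_eq_zero.mp ((pow_eq_zero_iff (two_ne_zero)).mp hy2)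
  constructor
  · exact le_antisymm (LinearMap.finrank_le_finrank_of_injective hinjT)
      (LinearMap.finrank_le_finrank_of_injective hinjT')
  · refine ⟨Real.sqrt μ, Real.sqrt_pos.mpr hμpos, fun x => ?_⟩
    have := key x
    have h := congrArg Real.sqrt this
    rwa [Real.sqrt_sq (norm_nonneg _), Real.sqrt_mul hμpos.le,
      Real.sqrt_sq (norm_nonneg _)] at h
end

section
/- Let A ∈ so(4m) (m > 1) be a nonzero skew-symmetric matrix commuting with three pairwise anticommuting orthogonal complex structures K₁, K₂, K₃ ∈ so(4m). Then for a generic X ∈ ℝ^{4m} (i.e., for X in a nonempty Zariski-open set, equivalently for at least one X), the five vectors AX, K₁X, K₂X, K₃X, X are linearly independent. -/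
open Matrix

/-- Let `A ∈ so(4m)` (`m > 1`) be a nonzero skew-symmetric matrix commuting with three
pairwise anticommuting orthogonal complex structures `K₁, K₂, K₃ ∈ so(4m)`.  Then for at
least one `X ∈ ℝ^{4m}` the five vectors `AX, K₁X, K₂X, K₃X, X` are linearly independent. -/
theorem stmt8 (m : ℕ) (hm : 1 < m)
    (A : Matrix (Fin (4 * m)) (Fin (4 * m)) ℝ) (hAskew : Aᵀ = -A) (hA0 : A ≠ 0)
    (K : Fin 3 → Matrix (Fin (4 * m)) (Fin (4 * m)) ℝ)
    (hKskew : ∀ i, (K i)ᵀ = -(K i))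
    (hKsq : ∀ i, K i * K i = -1)
    (hKanti : ∀ i j, i ≠ j → K i * K j = -(K j * K i))
    (hAK : ∀ i, A * K i = K i * A) :
    ∃ X : Fin (4 * m) → ℝ,
      LinearIndependent ℝ
        ![A.mulVec X, (K 0).mulVec X, (K 1).mulVec X, (K 2).mulVec X, X] := by
  by_contra hcon
  push_neg at hcon
  have flip : ∀ (M : Matrix (Fin (4*m)) (Fin (4*m)) ℝ) (y z : Fin (4*m) → ℝ),
      (M *ᵥ y) ⬝ᵥ z = y ⬝ᵥ (Mᵀ *ᵥ z) := by
    intro M y z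
    rw [dotProduct_comm, dotProduct_mulVec, mulVec_transpose, dotProduct_comm]
  have skew0 : ∀ (M : Matrix (Fin (4*m)) (Fin (4*m)) ℝ), Mᵀ = -M →
      ∀ v, v ⬝ᵥ (M *ᵥ v) = 0 := by
    intro M hM v
    have h := flip M v v
    rw [hM, neg_mulVec, dotProduct_neg, dotProduct_comm] at h
    linarith
  have dd : ∀ (M N : Matrix (Fin (4*m)) (Fin (4*m)) ℝ) (y u : Fin (4*m) → ℝ),
      (M *ᵥ y) ⬝ᵥ (N *ᵥ u) = y ⬝ᵥ ((Mᵀ * N) *ᵥ u) := by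
    intro M N y u
    rw [flip, mulVec_mulVec]
  -- S i := A * K i is symmetric
  have hSsym : ∀ i, (A * K i)ᵀ = A * K i := by
    intro i
    rw [transpose_mul, hKskew i, hAskew, neg_mul_neg, ← hAK]
  -- K j * K i is skew for i ≠ j
  have hKKskew : ∀ i j, i ≠ j → (K i * K j)ᵀ = -(K i * K j) := by
    intro i j hij
    rw [transpose_mul, hKskew, hKskew, neg_mul_neg, hKanti j i (Ne.symm hij)]
  -- Step A : base identity
  have base : ∀ X W : Fin (4*m) → ℝ,
      (X ⬝ᵥ X) * (W ⬝ᵥ (A *ᵥ X))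
      + (X ⬝ᵥ ((A * K 0) *ᵥ X)) * (W ⬝ᵥ (K 0 *ᵥ X))
      + (X ⬝ᵥ ((A * K 1) *ᵥ X)) * (W ⬝ᵥ (K 1 *ᵥ X))
      + (X ⬝ᵥ ((A * K 2) *ᵥ X)) * (W ⬝ᵥ (K 2 *ᵥ X)) = 0 := by
    intro X W
    by_cases hX : X = 0
    · simp [hX]
    -- dependency coefficients
    obtain ⟨g, hg, i0, hi0⟩ := Fintype.not_linearIndependent_iff.mp (hcon X)
    simp only [Fin.sum_univ_five, Matrix.cons_val_zero, Matrix.cons_val_one, Matrix.head_cons,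
      Matrix.cons_val_two, Matrix.tail_cons, Matrix.cons_val_three, Matrix.cons_val_four] at hg
    have hq : X ⬝ᵥ X ≠ 0 := fun h => hX (dotProduct_self_eq_zero.mp h)
    have hdot : ∀ u : Fin (4*m) → ℝ,
        g 0 * (u ⬝ᵥ (A *ᵥ X)) + g 1 * (u ⬝ᵥ (K 0 *ᵥ X)) + g 2 * (u ⬝ᵥ (K 1 *ᵥ X))
          + g 3 * (u ⬝ᵥ (K 2 *ᵥ X)) + g 4 * (u ⬝ᵥ X) = 0 := by
      intro u
      have h := congrArg (fun w => u ⬝ᵥ w) hg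
      simpa [dotProduct_add, dotProduct_smul, smul_eq_mul] using h
    -- dot with X : g 4 = 0
    have hg4 : g 4 = 0 := by
      have h := hdot X
      rw [skew0 A hAskew, skew0 (K 0) (hKskew 0), skew0 (K 1) (hKskew 1),
        skew0 (K 2) (hKskew 2)] at h
      simp only [mul_zero, zero_add] at h
      exact (mul_eq_zero.mp h).resolve_right hq
    -- dot with K j *ᵥ X
    have hd1 : ∀ j, (K j *ᵥ X) ⬝ᵥ (A *ᵥ X) = -(X ⬝ᵥ ((A * K j) *ᵥ X)) := by
      intro j
      rw [dd, hKskew j, neg_mul, ← hAK j, neg_mulVec, dotProduct_neg]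
    have hd2 : ∀ j i, j ≠ i → (K j *ᵥ X) ⬝ᵥ (K i *ᵥ X) = 0 := by
      intro j i h
      rw [dd, hKskew j, neg_mul, neg_mulVec, dotProduct_neg, skew0 _ (hKKskew j i h), neg_zero]
    have hd3 : ∀ j, (K j *ᵥ X) ⬝ᵥ (K j *ᵥ X) = X ⬝ᵥ X := by
      intro j
      rw [dd, hKskew j, neg_mul, hKsq j, neg_neg, one_mulVec]
    have hd4 : ∀ j, (K j *ᵥ X) ⬝ᵥ X = 0 := by
      intro j
      rw [dotProduct_comm]; exact skew0 _ (hKskew j) X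
    have heq0 : g 1 * (X ⬝ᵥ X) = g 0 * (X ⬝ᵥ ((A * K 0) *ᵥ X)) := by
      have h := hdot (K 0 *ᵥ X)
      rw [hd1 0, hd3 0, hd2 0 1 (by decide), hd2 0 2 (by decide), hd4 0, hg4] at h
      linarith
    have heq1 : g 2 * (X ⬝ᵥ X) = g 0 * (X ⬝ᵥ ((A * K 1) *ᵥ X)) := by
      have h := hdot (K 1 *ᵥ X)
      rw [hd1 1, hd3 1, hd2 1 0 (by decide), hd2 1 2 (by decide), hd4 1, hg4] at h
      linarith
    have heq2 : g 3 * (X ⬝ᵥ X) = g 0 * (X ⬝ᵥ ((A * K 2) *ᵥ X)) := by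
      have h := hdot (K 2 *ᵥ X)
      rw [hd1 2, hd3 2, hd2 2 0 (by decide), hd2 2 1 (by decide), hd4 2, hg4] at h
      linarith
    have hg0 : g 0 ≠ 0 := by
      intro h0
      apply hi0
      have e1 : g 1 = 0 := by
        rw [h0, zero_mul] at heq0; exact (mul_eq_zero.mp heq0).resolve_right hq
      have e2 : g 2 = 0 := by
        rw [h0, zero_mul] at heq1; exact (mul_eq_zero.mp heq1).resolve_right hq
      have e3 : g 3 = 0 := by
        rw [h0, zero_mul] at heq2; exact (mul_eq_zero.mp heq2).resolve_right hq
      fin_cases i0 <;> simp [h0, e1, e2, e3, hg4]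
    have hfin : g 0 * ((X ⬝ᵥ X) * (W ⬝ᵥ (A *ᵥ X))
        + (X ⬝ᵥ ((A * K 0) *ᵥ X)) * (W ⬝ᵥ (K 0 *ᵥ X))
        + (X ⬝ᵥ ((A * K 1) *ᵥ X)) * (W ⬝ᵥ (K 1 *ᵥ X))
        + (X ⬝ᵥ ((A * K 2) *ᵥ X)) * (W ⬝ᵥ (K 2 *ᵥ X))) = 0 := by
      have h := hdot W
      rw [hg4] at h
      linear_combination (X ⬝ᵥ X) * h - (W ⬝ᵥ (K 0 *ᵥ X)) * heq0
        - (W ⬝ᵥ (K 1 *ᵥ X)) * heq1 - (W ⬝ᵥ (K 2 *ᵥ X)) * heq2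
    exact (mul_eq_zero.mp hfin).resolve_left hg0
  -- Step B : key polarized identity
  have key : ∀ X Y : Fin (4*m) → ℝ,
      X ⬝ᵥ Y = 0 → Y ⬝ᵥ X = 0 →
      X ⬝ᵥ ((A * K 1) *ᵥ Y) = 0 → Y ⬝ᵥ ((A * K 1) *ᵥ X) = 0 →
      X ⬝ᵥ ((A * K 2) *ᵥ Y) = 0 → Y ⬝ᵥ ((A * K 2) *ᵥ X) = 0 →
      (X ⬝ᵥ X) * (Y ⬝ᵥ ((A * K 0) *ᵥ Y)) = (X ⬝ᵥ ((A * K 0) *ᵥ X)) * (Y ⬝ᵥ Y) := by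
    intro X Y c1 c1' c2 c2' c3 c3'
    have w1 : ∀ y u : Fin (4*m) → ℝ, (K 0 *ᵥ y) ⬝ᵥ (A *ᵥ u) = -(y ⬝ᵥ ((A * K 0) *ᵥ u)) := by
      intro y u
      rw [dd, hKskew 0, neg_mul, ← hAK 0, neg_mulVec, dotProduct_neg]
    have w2 : ∀ y u : Fin (4*m) → ℝ, (K 0 *ᵥ y) ⬝ᵥ (K 0 *ᵥ u) = y ⬝ᵥ u := by
      intro y u
      rw [dd, hKskew 0, neg_mul, hKsq 0, neg_neg, one_mulVec]
    have w3 : ∀ (j : Fin 3) (y u : Fin (4*m) → ℝ),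
        (K 0 *ᵥ y) ⬝ᵥ (K j *ᵥ u) = -(y ⬝ᵥ ((K 0 * K j) *ᵥ u)) := by
      intro j y u
      rw [dd, hKskew 0, neg_mul, neg_mulVec, dotProduct_neg]
    have z1 : Y ⬝ᵥ ((K 0 * K 1) *ᵥ Y) = 0 := skew0 _ (hKKskew 0 1 (by decide)) Y
    have z2 : Y ⬝ᵥ ((K 0 * K 2) *ᵥ Y) = 0 := skew0 _ (hKKskew 0 2 (by decide)) Y
    have h1 := base (X + Y) (K 0 *ᵥ Y)
    have h2 := base (X - Y) (K 0 *ᵥ Y)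
    simp only [w1, w2] at h1 h2
    simp only [w3 1, w3 2] at h1 h2
    simp only [mulVec_add, mulVec_sub, dotProduct_add, dotProduct_sub, add_dotProduct,
      sub_dotProduct] at h1 h2
    rw [c1, c1', c2, c2', c3, c3', z1, z2] at h1 h2
    linear_combination (h2 - h1) / 2
  -- Step C : existence of a common test vector, and the proportionality
  have prop : ∀ X X' : Fin (4*m) → ℝ,
      (X ⬝ᵥ ((A * K 0) *ᵥ X)) * (X' ⬝ᵥ X') = (X' ⬝ᵥ ((A * K 0) *ᵥ X')) * (X ⬝ᵥ X) := by
    intro X X'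
    set V : Matrix (Fin 6) (Fin (4*m)) ℝ := Matrix.of
      ![X, (A * K 1) *ᵥ X, (A * K 2) *ᵥ X, X', (A * K 1) *ᵥ X', (A * K 2) *ᵥ X'] with hV
    have hex : ∃ Y : Fin (4*m) → ℝ, Y ≠ 0 ∧ V.mulVecLin Y = 0 := by
      by_contra hno
      push_neg at hno
      have hinj : Function.Injective V.mulVecLin := by
        rw [← LinearMap.ker_eq_bot, LinearMap.ker_eq_bot']
        intro x hx
        by_contra hx0
        exact hno x hx0 hx
      have hle := LinearMap.finrank_le_finrank_of_injective hinj
      rw [Module.finrank_fintype_fun_eq_card, Module.finrank_fintype_fun_eq_card] at hle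
      simp only [Fintype.card_fin] at hle
      omega
    obtain ⟨Y, hY0, hY⟩ := hex
    have hcomp : ∀ j : Fin 6, V j ⬝ᵥ Y = 0 := by
      intro j
      exact congrFun hY j
    have d0 : X ⬝ᵥ Y = 0 := hcomp 0
    have d0' : Y ⬝ᵥ X = 0 := by rw [dotProduct_comm]; exact hcomp 0
    have d1 := hcomp 1
    have d2 := hcomp 2
    have d3 : X' ⬝ᵥ Y = 0 := hcomp 3
    have d3' : Y ⬝ᵥ X' = 0 := by rw [dotProduct_comm]; exact hcomp 3
    have d4 := hcomp 4
    have d5 := hcomp 5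
    simp only [hV, Matrix.of_apply, Matrix.cons_val_zero, Matrix.cons_val_one, Matrix.head_cons,
      Matrix.cons_val_two, Matrix.tail_cons, Matrix.cons_val_three, Matrix.cons_val_four] at d1 d2 d4 d5
    have e2' : Y ⬝ᵥ ((A * K 1) *ᵥ X) = 0 := by rw [dotProduct_comm]; exact d1
    have e2 : X ⬝ᵥ ((A * K 1) *ᵥ Y) = 0 := by rw [← hSsym 1, ← flip]; exact d1
    have e3' : Y ⬝ᵥ ((A * K 2) *ᵥ X) = 0 := by rw [dotProduct_comm]; exact d2
    have e3 : X ⬝ᵥ ((A * K 2) *ᵥ Y) = 0 := by rw [← hSsym 2, ← flip]; exact d2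
    have f2' : Y ⬝ᵥ ((A * K 1) *ᵥ X') = 0 := by rw [dotProduct_comm]; exact d4
    have f2 : X' ⬝ᵥ ((A * K 1) *ᵥ Y) = 0 := by rw [← hSsym 1, ← flip]; exact d4
    have f3' : Y ⬝ᵥ ((A * K 2) *ᵥ X') = 0 := by rw [dotProduct_comm]; exact d5
    have f3 : X' ⬝ᵥ ((A * K 2) *ᵥ Y) = 0 := by rw [← hSsym 2, ← flip]; exact d5
    have k1 := key X Y d0 d0' e2 e2' e3 e3'
    have k2 := key X' Y d3 d3' f2 f2' f3 f3'
    have hqY : Y ⬝ᵥ Y ≠ 0 := fun h => hY0 (dotProduct_self_eq_zero.mp h)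
    apply mul_right_cancel₀ hqY
    linear_combination (X ⬝ᵥ X) * k2 - (X' ⬝ᵥ X') * k1
  -- Step E : A * K 0 = c • 1
  have hS : ∃ c : ℝ, A * K 0 = c • (1 : Matrix (Fin (4*m)) (Fin (4*m)) ℝ) := by
    have hi : (0:ℕ) < 4*m := by omega
    set e₀ : Fin (4*m) → ℝ := Pi.single ⟨0, hi⟩ 1 with he₀
    have hq1 : e₀ ⬝ᵥ e₀ = 1 := by
      rw [he₀, single_dotProduct, Pi.single_eq_same, mul_one]
    set c := e₀ ⬝ᵥ ((A * K 0) *ᵥ e₀) with hcdef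
    refine ⟨c, ?_⟩
    have hquad : ∀ X, X ⬝ᵥ ((A * K 0) *ᵥ X) = c * (X ⬝ᵥ X) := by
      intro X
      have h := prop X e₀
      rw [hq1, mul_one] at h
      rw [h, hcdef, mul_comm]
    have hsym : ∀ u v : Fin (4*m) → ℝ,
        v ⬝ᵥ ((A * K 0) *ᵥ u) = u ⬝ᵥ ((A * K 0) *ᵥ v) := by
      intro u v
      rw [dotProduct_comm, flip, hSsym]
    have hbil : ∀ u v : Fin (4*m) → ℝ, u ⬝ᵥ ((A * K 0) *ᵥ v) = c * (u ⬝ᵥ v) := by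
      intro u v
      have h := hquad (u + v)
      simp only [mulVec_add, dotProduct_add, add_dotProduct] at h
      rw [hquad u, hquad v, hsym u v, dotProduct_comm v u] at h
      linarith
    have hMv : ∀ v : Fin (4*m) → ℝ, (A * K 0) *ᵥ v = c • v := by
      intro v
      have hw : ((A * K 0) *ᵥ v - c • v) ⬝ᵥ ((A * K 0) *ᵥ v - c • v) = 0 := by
        rw [dotProduct_sub, sub_dotProduct, sub_dotProduct, dotProduct_smul, dotProduct_smul,
          smul_dotProduct, smul_dotProduct, hbil ((A * K 0) *ᵥ v) v, hbil v v,
          dotProduct_comm ((A * K 0) *ᵥ v) v, hbil v v]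
        simp [smul_eq_mul]
      have := dotProduct_self_eq_zero.mp hw
      rwa [sub_eq_zero] at this
    ext i j
    have h := congrFun (hMv (Pi.single j 1)) i
    rw [Matrix.mulVec_single_one] at h
    simp only [Matrix.col_apply] at h
    rw [h]
    simp [Matrix.one_apply, Pi.single_apply, mul_comm]
  -- Step F : conclude A = 0, contradiction
  obtain ⟨c, hc⟩ := hS
  have hA : A = (-c) • K 0 := by
    have h1 : (A * K 0) * K 0 = (c • (1 : Matrix (Fin (4*m)) (Fin (4*m)) ℝ)) * K 0 := by rw [hc]
    rw [mul_assoc, hKsq 0, smul_mul_assoc, one_mul] at h1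
    have : -A = c • K 0 := by
      calc -A = A * (-1) := by rw [mul_neg, mul_one]
      _ = c • K 0 := h1
    rw [neg_smul]
    rw [← this, neg_neg]
  have hcomm := hAK 1
  rw [hA] at hcomm
  have hcomm2 : (-c) • (K 0 * K 1) = (-c) • (K 1 * K 0) := by
    rw [← smul_mul_assoc, ← mul_smul_comm]; exact hcomm
  rw [hKanti 0 1 (by decide), smul_neg] at hcomm2
  have hc0 : c = 0 := by
    by_contra hcne
    have h2 : (-c + -c) • (K 1 * K 0) = 0 := by
      rw [add_smul]
      nth_rewrite 1 [← hcomm2]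
      exact neg_add_cancel _
    have hKK : K 1 * K 0 = 0 := by
      rcases smul_eq_zero.mp h2 with h | h
      · exact absurd (by linarith : c = 0) hcne
      · exact h
    have h3 : K 1 * K 0 * K 0 = 0 := by rw [hKK, zero_mul]
    rw [mul_assoc, hKsq 0, mul_neg, mul_one, neg_eq_zero] at h3
    have h4 := hKsq 1
    rw [h3, zero_mul] at h4
    have := congrFun (congrFun h4 ⟨0, by omega⟩) ⟨0, by omega⟩
    simp at this
  rw [hc0, neg_zero, zero_smul] at hA
  exact hA0 hA
end

section
/- Let S ⊆ so(8) be the Lie algebra of block-diagonal matrices diag(U₁, U₂) with U₁, U₂ ∈ u(2) ⊆ so(4) (with respect to a fixed complex structure K on ℝ⁴ with K² = −I₄). Then any subalgebra 𝔥 ⊆ S isomorphic to su(2) consisting of matrices whose square is a multiple of I₈ is, up to the block structure, the diagonal of su(2) ⊕ su(2), and its centralizer in S is abelian of dimension 2. -/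
open Quaternion

attribute [local instance 100] LieRing.ofAssociativeRing

/-- `su(2)`, modelled as the Lie algebra of purely imaginary quaternions with the
commutator bracket. -/
noncomputable def su2 : LieSubalgebra ℝ (Quaternion ℝ) where
  carrier := {q : Quaternion ℝ | q.re = 0}
  add_mem' := by
    intro a b ha hb
    simp only [Set.mem_setOf_eq] at *
    simp [ha, hb]
  zero_mem' := by simp [Quaternion.re_zero]
  smul_mem' := by
    intro r a ha
    simp only [Set.mem_setOf_eq] at *
    simp [ha]
  lie_mem' := by
    intro a b ha hb
    simp only [Set.mem_setOf_eq] at *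
    rw [Ring.lie_def]
    simp [Quaternion.re_mul]
    ring

/-- The fixed complex structure `K` on `ℝ⁴ ≅ ℍ`: right multiplication by `i`. -/
noncomputable def Kop : Module.End ℝ (Quaternion ℝ) :=
  LinearMap.mulRight ℝ (⟨0, 1, 0, 0⟩ : Quaternion ℝ)

/-- Skew-symmetry of an endomorphism of `ℍ ≅ ℝ⁴`. -/
def SkewQ (A : Module.End ℝ (Quaternion ℝ)) : Prop :=
  ∀ x y : Quaternion ℝ, (inner ℝ (A x) y : ℝ) = - inner ℝ x (A y)

/-- Membership in `S ⊆ so(8)`: block-diagonal pairs `(U₁, U₂)` with each `Uᵢ ∈ u(2)`,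
i.e. skew-symmetric and commuting with the complex structure `K`. -/
def InS (p : Module.End ℝ (Quaternion ℝ) × Module.End ℝ (Quaternion ℝ)) : Prop :=
  SkewQ p.1 ∧ SkewQ p.2 ∧ p.1 * Kop = Kop * p.1 ∧ p.2 * Kop = Kop * p.2

/-! ### Auxiliary material -/

noncomputable abbrev qi : Quaternion ℝ := ⟨0,1,0,0⟩
noncomputable abbrev qj : Quaternion ℝ := ⟨0,0,1,0⟩
noncomputable abbrev qk : Quaternion ℝ := ⟨0,0,0,1⟩

lemma Kop_apply (x : Quaternion ℝ) : Kop x = x * qi := rfl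

lemma innerQ (a b : Quaternion ℝ) :
    (inner ℝ a b : ℝ) = a.re*b.re + a.imI*b.imI + a.imJ*b.imJ + a.imK*b.imK := by
  simp [Quaternion.inner_def, Quaternion.re_mul]

lemma skew_sq_zero {A : Module.End ℝ (Quaternion ℝ)} (hA : SkewQ A) (h : A * A = 0) :
    A = 0 := by
  apply LinearMap.ext
  intro x
  have h2 : A (A x) = 0 := by
    have := congrArg (fun f : Module.End ℝ (Quaternion ℝ) => f x) h
    simpa [Module.End.mul_apply] using this
  have h3 : (inner ℝ (A x) (A x) : ℝ) = 0 := by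
    have := hA x (A x)
    rw [h2] at this
    simpa [real_inner_comm] using this
  have h4 : A x = 0 := inner_self_eq_zero.mp h3
  simp [h4]

lemma classify {A : Module.End ℝ (Quaternion ℝ)} (hA : SkewQ A) (hK : A * Kop = Kop * A) :
    ∃ (p : Quaternion ℝ) (t : ℝ), p.re = 0 ∧ ∀ x, A x = p * x + t • (x * qi) := by
  have hcomm : ∀ x, A (x * qi) = (A x) * qi := by
    intro x
    have := congrArg (fun f : Module.End ℝ (Quaternion ℝ) => f x) hK
    simpa [Module.End.mul_apply, Kop_apply, LinearMap.mulRight_apply] using this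
  set a := A 1 with ha
  set d := A qj with hd
  have hAi : A qi = a * qi := by
    have := hcomm 1; simpa using this
  have hAk : A qk = -(d * qi) := by
    have h1 : A (qj * qi) = d * qi := hcomm qj
    have h2 : (qj * qi : Quaternion ℝ) = -qk := by
      simp [Quaternion.ext_iff, Quaternion.re_mul, Quaternion.imI_mul, Quaternion.imJ_mul,
        Quaternion.imK_mul]
    rw [h2, map_neg] at h1
    linear_combination (norm := module) -h1
  -- skew constraints
  have ha0 : a.re = 0 := by
    have := hA 1 1
    simp [innerQ, ha] at this
    linarith
  have hd2 : d.imJ = 0 := by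
    have := hA qj qj
    simp [innerQ, hd] at this
    linarith
  have hd0 : d.re = -a.imJ := by
    have := hA 1 qj
    simp [innerQ, ha, hd] at this
    linarith
  have hd1 : d.imI = -a.imK := by
    have := hA qi qj
    rw [hAi] at this
    simp [innerQ, hd, Quaternion.re_mul, Quaternion.imI_mul, Quaternion.imJ_mul,
      Quaternion.imK_mul] at this
    linarith
  refine ⟨a - ((a.imI - d.imK)/2) • qi, (a.imI - d.imK)/2, by simp [ha0], ?_⟩
  intro x
  have hx : x = x.re • 1 + x.imI • qi + x.imJ • qj + x.imK • qk := by
    simp [Quaternion.ext_iff]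
  have hAx : A x = x.re • a + x.imI • (a * qi) + x.imJ • d + x.imK • (-(d * qi)) := by
    conv_lhs => rw [hx]
    simp [map_add, map_smul, hAi, hAk, ← ha, ← hd]
  rw [hAx]
  simp only [Quaternion.ext_iff, Quaternion.re_mul, Quaternion.imI_mul, Quaternion.imJ_mul,
    Quaternion.imK_mul, Quaternion.re_add, Quaternion.imI_add, Quaternion.imJ_add,
    Quaternion.imK_add, Quaternion.re_smul, Quaternion.imI_smul, Quaternion.imJ_smul,
    Quaternion.imK_smul, Quaternion.re_sub, Quaternion.imI_sub, Quaternion.imJ_sub,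
    Quaternion.imK_sub, Quaternion.re_neg, Quaternion.imI_neg, Quaternion.imJ_neg,
    Quaternion.imK_neg, Quaternion.re_one, Quaternion.imI_one, Quaternion.imJ_one,
    Quaternion.imK_one, smul_eq_mul]
  refine ⟨?_, ?_, ?_, ?_⟩ <;> (rw [ha0, hd2, hd0, hd1]; ring)

set_option maxHeartbeats 2000000 in
lemma classify2 {A : Module.End ℝ (Quaternion ℝ)} (hA : SkewQ A) (hK : A * Kop = Kop * A)
    {c : ℝ} (hc : A * A = c • 1) :
    (∃ u : Quaternion ℝ, u.re = 0 ∧ A = LinearMap.mulLeft ℝ u) ∨ (∃ t : ℝ, A = t • Kop) := by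
  obtain ⟨p, t, hp0, hAx⟩ := classify hA hK
  have e1 : (p*p + t•(p*qi)) + t•((p*qi) + t•(qi*qi)) = c • (1 : Quaternion ℝ) := by
    have h0 : A 1 = p + t • qi := by simpa using hAx 1
    have := congrArg (fun f : Module.End ℝ (Quaternion ℝ) => f 1) hc
    simp only [Module.End.mul_apply] at this
    rw [h0, map_add, map_smul, hAx p, hAx qi] at this
    simpa using this
  have e2 : (p*(p*qj) + t•((p*qj)*qi)) + t•((p*(qj*qi)) + t•((qj*qi)*qi)) = c • qj := by
    have := congrArg (fun f : Module.End ℝ (Quaternion ℝ) => f qj) hc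
    simp only [Module.End.mul_apply] at this
    rw [hAx qj, map_add, map_smul, hAx (p*qj), hAx (qj*qi)] at this
    simpa using this
  simp only [Quaternion.ext_iff, Quaternion.re_mul, Quaternion.imI_mul, Quaternion.imJ_mul,
    Quaternion.imK_mul, Quaternion.re_add, Quaternion.imI_add, Quaternion.imJ_add,
    Quaternion.imK_add, Quaternion.re_smul, Quaternion.imI_smul, Quaternion.imJ_smul,
    Quaternion.imK_smul, Quaternion.re_one, Quaternion.imI_one, Quaternion.imJ_one,
    Quaternion.imK_one, smul_eq_mul, hp0] at e1 e2
  obtain ⟨e1a, e1b, e1c, e1d⟩ := e1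
  obtain ⟨e2a, e2b, e2c, e2d⟩ := e2
  have ht1 : t * p.imI = 0 := by nlinarith [e1a, e2c]
  have ht2 : t * p.imJ = 0 := by nlinarith [e1d]
  have ht3 : t * p.imK = 0 := by nlinarith [e1c]
  rcases eq_or_ne t 0 with h | h
  · left
    refine ⟨p, hp0, ?_⟩
    apply LinearMap.ext; intro x
    rw [hAx x, h]
    simp
  · right
    have hp : p = 0 := by
      have h1 : p.imI = 0 := by
        rcases mul_eq_zero.mp ht1 with h'|h'; exact absurd h' h; exact h'
      have h2 : p.imJ = 0 := by
        rcases mul_eq_zero.mp ht2 with h'|h'; exact absurd h' h; exact h'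
      have h3 : p.imK = 0 := by
        rcases mul_eq_zero.mp ht3 with h'|h'; exact absurd h' h; exact h'
      simp [Quaternion.ext_iff, hp0, h1, h2, h3]
    refine ⟨t, ?_⟩
    apply LinearMap.ext; intro x
    rw [hAx x, hp]
    simp [Kop_apply]

lemma normpos {u : Quaternion ℝ} (h0 : u.re = 0) (h : u ≠ 0) :
    0 < u.imI^2 + u.imJ^2 + u.imK^2 := by
  rcases lt_or_ge 0 (u.imI^2 + u.imJ^2 + u.imK^2) with h' | h'
  · exact h'
  · exfalso
    apply h
    have h1 : u.imI = 0 := by nlinarith [sq_nonneg u.imI, sq_nonneg u.imJ, sq_nonneg u.imK]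
    have h2 : u.imJ = 0 := by nlinarith [sq_nonneg u.imI, sq_nonneg u.imJ, sq_nonneg u.imK]
    have h3 : u.imK = 0 := by nlinarith [sq_nonneg u.imI, sq_nonneg u.imJ, sq_nonneg u.imK]
    simp [Quaternion.ext_iff, h0, h1, h2, h3]

lemma quat_li {u v : Quaternion ℝ} (hu0 : u.re = 0) (hv0 : v.re = 0)
    (huv : (inner ℝ u v : ℝ) = 0) (hu : u ≠ 0) (hv : v ≠ 0) :
    LinearIndependent ℝ ![1, u, v, u*v] := by
  have hdot : u.imI*v.imI + u.imJ*v.imJ + u.imK*v.imK = 0 := by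
    simpa [innerQ, hu0, hv0] using huv
  rw [Fintype.linearIndependent_iff]
  intro g hg
  simp only [Fin.sum_univ_four, Matrix.cons_val_zero, Matrix.cons_val_one, Matrix.head_cons,
    Matrix.cons_val_two, Matrix.tail_cons, Matrix.cons_val_three] at hg
  have hg' := hg
  simp only [Quaternion.ext_iff, Quaternion.re_add, Quaternion.imI_add, Quaternion.imJ_add,
    Quaternion.imK_add, Quaternion.re_smul, Quaternion.imI_smul, Quaternion.imJ_smul,
    Quaternion.imK_smul, Quaternion.re_mul, Quaternion.imI_mul, Quaternion.imJ_mul,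
    Quaternion.imK_mul, Quaternion.re_one, Quaternion.imI_one, Quaternion.imJ_one,
    Quaternion.imK_one, Quaternion.re_zero, Quaternion.imI_zero, Quaternion.imJ_zero,
    Quaternion.imK_zero, smul_eq_mul, hu0, hv0] at hg
  obtain ⟨h0, h1, h2, h3⟩ := hg
  have hupos := normpos hu0 hu
  have hvpos := normpos hv0 hv
  have hg0 : g 0 = 0 := by linear_combination h0 + g 3 * hdot
  have hg1 : g 1 = 0 := by
    have key : g 1 * (u.imI^2 + u.imJ^2 + u.imK^2) = 0 := by
      linear_combination u.imI * h1 + u.imJ * h2 + u.imK * h3 - g 2 * hdot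
    rcases mul_eq_zero.mp key with h | h
    · exact h
    · exact absurd h (ne_of_gt hupos)
  have hg2 : g 2 = 0 := by
    have key : g 2 * (v.imI^2 + v.imJ^2 + v.imK^2) = 0 := by
      linear_combination v.imI * h1 + v.imJ * h2 + v.imK * h3 - g 1 * hdot
    rcases mul_eq_zero.mp key with h | h
    · exact h
    · exact absurd h (ne_of_gt hvpos)
  have hg3 : g 3 = 0 := by
    rw [hg0, hg1, hg2] at hg'
    simp only [zero_smul, zero_add, add_zero] at hg'
    rcases smul_eq_zero.mp hg' with h | h
    · exact h
    · exact absurd h (mul_ne_zero hu hv)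
  intro i
  fin_cases i <;> assumption

lemma end_zero_of {u v : Quaternion ℝ} (hu0 : u.re = 0) (hv0 : v.re = 0)
    (huv : (inner ℝ u v : ℝ) = 0) (hu : u ≠ 0) (hv : v ≠ 0) (S : Module.End ℝ (Quaternion ℝ))
    (h1 : S 1 = 0) (h2 : S u = 0) (h3 : S v = 0) (h4 : S (u*v) = 0) : S = 0 := by
  have li := quat_li hu0 hv0 huv hu hv
  have hsp : Submodule.span ℝ (Set.range ![1,u,v,u*v]) = ⊤ :=
    li.span_eq_top_of_card_eq_finrank (by simp [Quaternion.finrank_eq_four])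
  apply LinearMap.ext; intro x
  have hx : x ∈ Submodule.span ℝ (Set.range ![1,u,v,u*v]) := by rw [hsp]; trivial
  simp only [LinearMap.zero_apply]
  refine Submodule.span_induction (p := fun y _ => S y = 0) ?_ ?_ ?_ ?_ hx
  · rintro y ⟨i, rfl⟩
    fin_cases i <;> simpa
  · simp
  · intro a b _ _ ha hb; simp [ha, hb]
  · intro r a _ ha; simp [ha]

lemma commutant {T : Module.End ℝ (Quaternion ℝ)} (hT : SkewQ T) (hK : T * Kop = Kop * T)
    {u v : Quaternion ℝ} (hu0 : u.re = 0) (hv0 : v.re = 0) (huv : (inner ℝ u v : ℝ) = 0)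
    (hu : u ≠ 0) (hv : v ≠ 0)
    (hcu : T * LinearMap.mulLeft ℝ u = LinearMap.mulLeft ℝ u * T)
    (hcv : T * LinearMap.mulLeft ℝ v = LinearMap.mulLeft ℝ v * T) :
    ∃ s : ℝ, T = s • Kop := by
  set b := T 1 with hb
  have hbre : b.re = 0 := by
    have := hT 1 1
    simp [innerQ, ← hb] at this
    linarith
  have hTu : T u = u * b := by
    have := congrArg (fun f : Module.End ℝ (Quaternion ℝ) => f 1) hcu
    simpa [Module.End.mul_apply, ← hb] using this
  have hTv : T v = v * b := by
    have := congrArg (fun f : Module.End ℝ (Quaternion ℝ) => f 1) hcv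
    simpa [Module.End.mul_apply, ← hb] using this
  have hTuv : T (u * v) = (u * v) * b := by
    have := congrArg (fun f : Module.End ℝ (Quaternion ℝ) => f v) hcu
    simp only [Module.End.mul_apply, LinearMap.mulLeft_apply] at this
    rw [this, hTv, mul_assoc]
  have hS0 : T - LinearMap.mulRight ℝ b = 0 := by
    refine end_zero_of hu0 hv0 huv hu hv _ ?_ ?_ ?_ ?_ <;>
      simp [LinearMap.sub_apply, LinearMap.mulRight_apply, hTu, hTv, hTuv, hb]
  have hTeq : T = LinearMap.mulRight ℝ b := by rwa [sub_eq_zero] at hS0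
  have hbi : qi * b = b * qi := by
    have := congrArg (fun f : Module.End ℝ (Quaternion ℝ) => f 1) hK
    simp only [Module.End.mul_apply, Kop_apply, LinearMap.mulRight_apply, one_mul] at this
    rw [hTeq] at this
    simpa using this
  have hbJ : b.imJ = 0 := by
    simp only [Quaternion.ext_iff, Quaternion.re_mul, Quaternion.imI_mul, Quaternion.imJ_mul,
      Quaternion.imK_mul] at hbi
    obtain ⟨_, _, h3, h4⟩ := hbi
    linarith
  have hbK : b.imK = 0 := by
    simp only [Quaternion.ext_iff, Quaternion.re_mul, Quaternion.imI_mul, Quaternion.imJ_mul,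
      Quaternion.imK_mul] at hbi
    obtain ⟨_, _, h3, h4⟩ := hbi
    linarith
  refine ⟨b.imI, ?_⟩
  rw [hTeq]
  apply LinearMap.ext; intro x
  simp only [LinearMap.mulRight_apply, LinearMap.smul_apply, Kop_apply, Quaternion.ext_iff,
    Quaternion.re_mul, Quaternion.imI_mul, Quaternion.imJ_mul, Quaternion.imK_mul,
    Quaternion.re_smul, Quaternion.imI_smul, Quaternion.imJ_smul, Quaternion.imK_smul,
    smul_eq_mul, hbre, hbJ, hbK]
  refine ⟨by ring, by ring, by ring, by ring⟩

lemma mem_su2 {q : Quaternion ℝ} : q ∈ su2 ↔ q.re = 0 := Iff.rfl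

lemma su2_pair : ∃ a b : su2, ⁅a, b⁆ ≠ 0 := by
  refine ⟨⟨qi, mem_su2.mpr rfl⟩, ⟨qj, mem_su2.mpr rfl⟩, ?_⟩
  intro h
  have h2 := congrArg (Subtype.val) h
  rw [LieSubalgebra.coe_bracket, Ring.lie_def] at h2
  simp [Quaternion.ext_iff, Quaternion.re_mul, Quaternion.imI_mul, Quaternion.imJ_mul,
    Quaternion.imK_mul] at h2

lemma su2_center (z : su2) (h : ∀ w : su2, ⁅z, w⁆ = 0) : z = 0 := by
  have hi := h ⟨qi, mem_su2.mpr rfl⟩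
  have hj := h ⟨qj, mem_su2.mpr rfl⟩
  have hre : (z : Quaternion ℝ).re = 0 := z.2
  apply Subtype.ext
  have hi' : (z : Quaternion ℝ) * qi - qi * (z : Quaternion ℝ) = 0 := by
    have := congrArg (Subtype.val) hi
    rw [LieSubalgebra.coe_bracket, Ring.lie_def] at this
    simpa using this
  have hj' : (z : Quaternion ℝ) * qj - qj * (z : Quaternion ℝ) = 0 := by
    have := congrArg (Subtype.val) hj
    rw [LieSubalgebra.coe_bracket, Ring.lie_def] at this
    simpa using this
  simp only [Quaternion.ext_iff, Quaternion.re_sub, Quaternion.imI_sub, Quaternion.imJ_sub,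
    Quaternion.imK_sub, Quaternion.re_mul, Quaternion.imI_mul, Quaternion.imJ_mul,
    Quaternion.imK_mul, Quaternion.re_zero, Quaternion.imI_zero, Quaternion.imJ_zero,
    Quaternion.imK_zero] at hi' hj'
  obtain ⟨a1, a2, a3, a4⟩ := hi'
  obtain ⟨b1, b2, b3, b4⟩ := hj'
  simp only [Quaternion.ext_iff, Quaternion.re_zero, Quaternion.imI_zero, Quaternion.imJ_zero,
    Quaternion.imK_zero, ZeroMemClass.coe_zero]
  refine ⟨hre, by linarith, by linarith, by linarith⟩

lemma skew_Kop : SkewQ Kop := by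
  intro x y
  simp only [Kop_apply, LinearMap.mulRight_apply, innerQ, Quaternion.re_mul, Quaternion.imI_mul,
    Quaternion.imJ_mul, Quaternion.imK_mul]
  ring

lemma Kop_ne_zero : Kop ≠ 0 := by
  intro h
  have := congrArg (fun f : Module.End ℝ (Quaternion ℝ) => f 1) h
  simp only [Kop_apply, LinearMap.mulRight_apply, one_mul, LinearMap.zero_apply] at this
  rw [Quaternion.ext_iff] at this
  simp at this

lemma mulLeft_mul' (a b : Quaternion ℝ) :
    LinearMap.mulLeft ℝ a * LinearMap.mulLeft ℝ b = LinearMap.mulLeft ℝ (a * b) := by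
  apply LinearMap.ext; intro z
  simp [mul_assoc]

lemma mulLeft_shift (w u : Quaternion ℝ) (r : ℝ) :
    LinearMap.mulLeft ℝ w - r • LinearMap.mulLeft ℝ u = LinearMap.mulLeft ℝ (w - r • u) := by
  apply LinearMap.ext; intro z
  simp [sub_mul, smul_mul_assoc]

lemma lieEquiv_map_lie {L₁ L₂ : Type*} [LieRing L₁] [LieAlgebra ℝ L₁] [LieRing L₂]
    [LieAlgebra ℝ L₂] (e : L₁ ≃ₗ⁅ℝ⁆ L₂) (x y : L₁) : e ⁅x, y⁆ = ⁅e x, e y⁆ := by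
  have h := LieHom.map_lie (e : L₁ →ₗ⁅ℝ⁆ L₂) x y
  simp only [LieEquiv.coe_toLieHom] at h
  exact h

lemma lieEquiv_map_zero {L₁ L₂ : Type*} [LieRing L₁] [LieAlgebra ℝ L₁] [LieRing L₂]
    [LieAlgebra ℝ L₂] (e : L₁ ≃ₗ⁅ℝ⁆ L₂) : e 0 = 0 := by
  have := map_zero (e : L₁ ≃ₗ[ℝ] L₂)
  simpa using this

set_option maxHeartbeats 1000000 in
/-- Any Lie subalgebra `𝔥 ⊆ S = u(2) ⊕ u(2) ⊆ so(8)` isomorphic to `su(2)` all of whose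
elements square (as block-diagonal operators on `ℝ⁸ ≅ ℍ²`) to multiples of the identity
projects injectively to both blocks (a diagonal embedding), and its centralizer in `S`
is abelian of dimension `2`. -/
theorem stmt14
    (𝔥 : LieSubalgebra ℝ (Module.End ℝ (Quaternion ℝ) × Module.End ℝ (Quaternion ℝ)))
    (hS : ∀ p ∈ 𝔥, InS p)
    (hsq : ∀ p ∈ 𝔥, ∃ c : ℝ,
      p.1 * p.1 = c • (1 : Module.End ℝ (Quaternion ℝ)) ∧
      p.2 * p.2 = c • (1 : Module.End ℝ (Quaternion ℝ)))
    (hiso : Nonempty (𝔥 ≃ₗ⁅ℝ⁆ su2)) :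
    (∀ p q : Module.End ℝ (Quaternion ℝ) × Module.End ℝ (Quaternion ℝ),
        p ∈ 𝔥 → q ∈ 𝔥 → p.1 = q.1 → p = q) ∧
    (∀ p q : Module.End ℝ (Quaternion ℝ) × Module.End ℝ (Quaternion ℝ),
        p ∈ 𝔥 → q ∈ 𝔥 → p.2 = q.2 → p = q) ∧
    ∃ Z₁ Z₂ : Module.End ℝ (Quaternion ℝ) × Module.End ℝ (Quaternion ℝ),
      (InS Z₁ ∧ ∀ p ∈ 𝔥, Z₁.1 * p.1 = p.1 * Z₁.1 ∧ Z₁.2 * p.2 = p.2 * Z₁.2) ∧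
      (InS Z₂ ∧ ∀ p ∈ 𝔥, Z₂.1 * p.1 = p.1 * Z₂.1 ∧ Z₂.2 * p.2 = p.2 * Z₂.2) ∧
      LinearIndependent ℝ ![Z₁, Z₂] ∧
      (∀ q, (InS q ∧ ∀ p ∈ 𝔥, q.1 * p.1 = p.1 * q.1 ∧ q.2 * p.2 = p.2 * q.2) →
        ∃ a b : ℝ, q = a • Z₁ + b • Z₂) ∧
      (∀ q q', (InS q ∧ ∀ p ∈ 𝔥, q.1 * p.1 = p.1 * q.1 ∧ q.2 * p.2 = p.2 * q.2) →
        (InS q' ∧ ∀ p ∈ 𝔥, q'.1 * p.1 = p.1 * q'.1 ∧ q'.2 * p.2 = p.2 * q'.2) →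
        q.1 * q'.1 = q'.1 * q.1 ∧ q.2 * q'.2 = q'.2 * q.2) := by
  obtain ⟨e⟩ := hiso
  -- injectivity of the two projections
  have key1 : ∀ p, p ∈ 𝔥 → p.1 = 0 → p = 0 := by
    intro p hp h1
    obtain ⟨c, hc1, hc2⟩ := hsq p hp
    obtain ⟨-, hsk2, -, -⟩ := hS p hp
    rw [h1, mul_zero] at hc1
    have hc0 : c = 0 := by
      rcases smul_eq_zero.mp hc1.symm with h | h
      · exact h
      · exact absurd h one_ne_zero
    rw [hc0, zero_smul] at hc2
    have h2 := skew_sq_zero hsk2 hc2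
    exact Prod.ext h1 h2
  have key2 : ∀ p, p ∈ 𝔥 → p.2 = 0 → p = 0 := by
    intro p hp h2
    obtain ⟨c, hc1, hc2⟩ := hsq p hp
    obtain ⟨hsk1, -, -, -⟩ := hS p hp
    rw [h2, mul_zero] at hc2
    have hc0 : c = 0 := by
      rcases smul_eq_zero.mp hc2.symm with h | h
      · exact h
      · exact absurd h one_ne_zero
    rw [hc0, zero_smul] at hc1
    have h1 := skew_sq_zero hsk1 hc1
    exact Prod.ext h1 h2
  -- centrality
  have central : ∀ p, (hp : p ∈ 𝔥) → (∀ q ∈ 𝔥, ⁅p, q⁆ = 0) → p = 0 := by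
    intro p hp hcomm
    have h1 : ∀ w : su2, ⁅e ⟨p, hp⟩, w⁆ = 0 := by
      intro w
      have h0 : ⁅(⟨p, hp⟩ : 𝔥), e.symm w⁆ = 0 := by
        have hc : (↑⁅(⟨p, hp⟩ : 𝔥), e.symm w⁆ :
            Module.End ℝ (Quaternion ℝ) × Module.End ℝ (Quaternion ℝ)) = 0 := by
          rw [LieSubalgebra.coe_bracket]
          exact hcomm _ (e.symm w).2
        exact ZeroMemClass.coe_eq_zero.mp hc
      calc ⁅e ⟨p, hp⟩, w⁆ = ⁅e ⟨p, hp⟩, e (e.symm w)⁆ := by rw [e.apply_symm_apply]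
        _ = e ⁅(⟨p, hp⟩ : 𝔥), e.symm w⁆ := (lieEquiv_map_lie e _ _).symm
        _ = 0 := by rw [h0]; exact lieEquiv_map_zero e
    have hz := su2_center (e ⟨p, hp⟩) h1
    have h2 : (⟨p, hp⟩ : 𝔥) = 0 := by
      apply (EquivLike.injective e)
      rw [hz]
      exact (lieEquiv_map_zero e).symm
    exact congrArg Subtype.val h2
  -- every member has left-multiplication components
  have hleft1 : ∀ p, p ∈ 𝔥 → ∃ u : Quaternion ℝ, u.re = 0 ∧ p.1 = LinearMap.mulLeft ℝ u := by
    intro p hp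
    obtain ⟨c, hc1, hc2⟩ := hsq p hp
    obtain ⟨hsk1, hsk2, hK1, hK2⟩ := hS p hp
    rcases classify2 hsk1 hK1 hc1 with ⟨u, hu0, hu⟩ | ⟨t, ht⟩
    · exact ⟨u, hu0, hu⟩
    · have hp0 : p = 0 := by
        apply central p hp
        intro q hq
        have hq' := (hS q hq).2.2.1
        apply key1 _ (𝔥.lie_mem hp hq)
        show (⁅p, q⁆).1 = 0
        rw [Ring.lie_def]
        show p.1 * q.1 - q.1 * p.1 = 0
        rw [ht, smul_mul_assoc, mul_smul_comm, hq', sub_self]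
      refine ⟨0, rfl, ?_⟩
      rw [hp0]
      apply LinearMap.ext; intro z; simp
  have hleft2 : ∀ p, p ∈ 𝔥 → ∃ u : Quaternion ℝ, u.re = 0 ∧ p.2 = LinearMap.mulLeft ℝ u := by
    intro p hp
    obtain ⟨c, hc1, hc2⟩ := hsq p hp
    obtain ⟨hsk1, hsk2, hK1, hK2⟩ := hS p hp
    rcases classify2 hsk2 hK2 hc2 with ⟨u, hu0, hu⟩ | ⟨t, ht⟩
    · exact ⟨u, hu0, hu⟩
    · have hp0 : p = 0 := by
        apply central p hp
        intro q hq
        have hq' := (hS q hq).2.2.2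
        apply key2 _ (𝔥.lie_mem hp hq)
        show (⁅p, q⁆).2 = 0
        rw [Ring.lie_def]
        show p.2 * q.2 - q.2 * p.2 = 0
        rw [ht, smul_mul_assoc, mul_smul_comm, hq', sub_self]
      refine ⟨0, rfl, ?_⟩
      rw [hp0]
      apply LinearMap.ext; intro z; simp
  -- a noncommuting pair
  obtain ⟨a, b, hab⟩ := su2_pair
  set x : 𝔥 := e.symm a with hxdef
  set y : 𝔥 := e.symm b with hydef
  have hxy : ⁅x, y⁆ ≠ 0 := by
    intro h
    apply hab
    have h1 : e ⁅x, y⁆ = ⁅e x, e y⁆ := lieEquiv_map_lie e x y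
    rw [h, hxdef, hydef, e.apply_symm_apply, e.apply_symm_apply] at h1
    rw [← h1]
    exact lieEquiv_map_zero e
  set xa : Module.End ℝ (Quaternion ℝ) × Module.End ℝ (Quaternion ℝ) := ↑x with hxa
  set ya : Module.End ℝ (Quaternion ℝ) × Module.End ℝ (Quaternion ℝ) := ↑y with hya
  have hxm : xa ∈ 𝔥 := x.2
  have hym : ya ∈ 𝔥 := y.2
  have hxyamb : ⁅xa, ya⁆ ≠ 0 := by
    intro h
    apply hxy
    have hc : (↑⁅x, y⁆ :
        Module.End ℝ (Quaternion ℝ) × Module.End ℝ (Quaternion ℝ)) = 0 := by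
      rw [LieSubalgebra.coe_bracket]
      exact h
    exact ZeroMemClass.coe_eq_zero.mp hc
  obtain ⟨u₁, hu₁0, hxu₁⟩ := hleft1 xa hxm
  obtain ⟨w₁, hw₁0, hyw₁⟩ := hleft1 ya hym
  obtain ⟨u₂, hu₂0, hxu₂⟩ := hleft2 xa hxm
  obtain ⟨w₂, hw₂0, hyw₂⟩ := hleft2 ya hym
  have hne1 : u₁ * w₁ ≠ w₁ * u₁ := by
    intro h
    apply hxyamb
    apply key1 _ (𝔥.lie_mem hxm hym)
    rw [Ring.lie_def]
    simp only [Prod.fst_sub, Prod.fst_mul]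
    rw [hxu₁, hyw₁, mulLeft_mul', mulLeft_mul', h, sub_self]
  have hne2 : u₂ * w₂ ≠ w₂ * u₂ := by
    intro h
    apply hxyamb
    apply key2 _ (𝔥.lie_mem hxm hym)
    rw [Ring.lie_def]
    simp only [Prod.snd_sub, Prod.snd_mul]
    rw [hxu₂, hyw₂, mulLeft_mul', mulLeft_mul', h, sub_self]
  have hu₁ne : u₁ ≠ 0 := by rintro rfl; exact hne1 (by rw [zero_mul, mul_zero])
  have hw₁ne : w₁ ≠ 0 := by rintro rfl; exact hne1 (by rw [zero_mul, mul_zero])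
  have hu₂ne : u₂ ≠ 0 := by rintro rfl; exact hne2 (by rw [zero_mul, mul_zero])
  have hw₂ne : w₂ ≠ 0 := by rintro rfl; exact hne2 (by rw [zero_mul, mul_zero])
  -- orthogonalized partners
  set r₁ : ℝ := (inner ℝ u₁ w₁ : ℝ) / (inner ℝ u₁ u₁ : ℝ) with hr₁
  set v₁ : Quaternion ℝ := w₁ - r₁ • u₁ with hv₁
  set r₂ : ℝ := (inner ℝ u₂ w₂ : ℝ) / (inner ℝ u₂ u₂ : ℝ) with hr₂
  set v₂ : Quaternion ℝ := w₂ - r₂ • u₂ with hv₂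
  have hu₁inner : (inner ℝ u₁ u₁ : ℝ) ≠ 0 := fun h => hu₁ne (inner_self_eq_zero.mp h)
  have hu₂inner : (inner ℝ u₂ u₂ : ℝ) ≠ 0 := fun h => hu₂ne (inner_self_eq_zero.mp h)
  have hv₁0 : v₁.re = 0 := by simp [hv₁, hw₁0, hu₁0]
  have hv₂0 : v₂.re = 0 := by simp [hv₂, hw₂0, hu₂0]
  have hv₁orth : (inner ℝ u₁ v₁ : ℝ) = 0 := by
    rw [hv₁, inner_sub_right, real_inner_smul_right, hr₁]
    field_simp
    ring
  have hv₂orth : (inner ℝ u₂ v₂ : ℝ) = 0 := by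
    rw [hv₂, inner_sub_right, real_inner_smul_right, hr₂]
    field_simp
    ring
  have hv₁ne : v₁ ≠ 0 := by
    intro h
    apply hne1
    have hw : w₁ = r₁ • u₁ := by rwa [hv₁, sub_eq_zero] at h
    rw [hw, mul_smul_comm, smul_mul_assoc]
  have hv₂ne : v₂ ≠ 0 := by
    intro h
    apply hne2
    have hw : w₂ = r₂ • u₂ := by rwa [hv₂, sub_eq_zero] at h
    rw [hw, mul_smul_comm, smul_mul_assoc]
  -- the orthogonalized elements of 𝔥
  set y₁ : Module.End ℝ (Quaternion ℝ) × Module.End ℝ (Quaternion ℝ) := ya - r₁ • xa with hy₁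
  set y₂ : Module.End ℝ (Quaternion ℝ) × Module.End ℝ (Quaternion ℝ) := ya - r₂ • xa with hy₂
  have hy₁mem : y₁ ∈ 𝔥 := 𝔥.sub_mem hym (𝔥.smul_mem r₁ hxm)
  have hy₂mem : y₂ ∈ 𝔥 := 𝔥.sub_mem hym (𝔥.smul_mem r₂ hxm)
  have hy₁1 : y₁.1 = LinearMap.mulLeft ℝ v₁ := by
    rw [hy₁]
    simp only [Prod.fst_sub, Prod.smul_fst]
    rw [hyw₁, hxu₁, mulLeft_shift]
  have hy₂2 : y₂.2 = LinearMap.mulLeft ℝ v₂ := by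
    rw [hy₂]
    simp only [Prod.snd_sub, Prod.smul_snd]
    rw [hyw₂, hxu₂, mulLeft_shift]
  -- conclusions
  have inj1 : ∀ p q : Module.End ℝ (Quaternion ℝ) × Module.End ℝ (Quaternion ℝ),
      p ∈ 𝔥 → q ∈ 𝔥 → p.1 = q.1 → p = q := by
    intro p q hp hq h
    have := key1 (p - q) (sub_mem hp hq) (by show p.1 - q.1 = 0; rw [h, sub_self])
    have h2 : p - q = 0 := this
    rwa [sub_eq_zero] at h2
  have inj2 : ∀ p q : Module.End ℝ (Quaternion ℝ) × Module.End ℝ (Quaternion ℝ),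
      p ∈ 𝔥 → q ∈ 𝔥 → p.2 = q.2 → p = q := by
    intro p q hp hq h
    have := key2 (p - q) (sub_mem hp hq) (by show p.2 - q.2 = 0; rw [h, sub_self])
    have h2 : p - q = 0 := this
    rwa [sub_eq_zero] at h2
  refine ⟨inj1, inj2, (Kop, 0), (0, Kop), ?_, ?_, ?_, ?_, ?_⟩
  · refine ⟨⟨skew_Kop, ?_, rfl, by simp⟩, ?_⟩
    · intro x y; simp
    · intro p hp
      exact ⟨((hS p hp).2.2.1).symm, by simp⟩
  · refine ⟨⟨?_, skew_Kop, by simp, rfl⟩, ?_⟩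
    · intro x y; simp
    · intro p hp
      exact ⟨by simp, ((hS p hp).2.2.2).symm⟩
  · rw [linearIndependent_fin2]
    constructor
    · intro h
      apply Kop_ne_zero
      exact congrArg Prod.snd h
    · intro s h
      apply Kop_ne_zero
      have := congrArg Prod.fst h
      simpa using this.symm
  · intro q ⟨hqS, hqcomm⟩
    obtain ⟨hsk1, hsk2, hK1, hK2⟩ := hqS
    have hcu₁ : q.1 * LinearMap.mulLeft ℝ u₁ = LinearMap.mulLeft ℝ u₁ * q.1 := by
      rw [← hxu₁]; exact (hqcomm xa hxm).1
    have hcv₁ : q.1 * LinearMap.mulLeft ℝ v₁ = LinearMap.mulLeft ℝ v₁ * q.1 := by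
      rw [← hy₁1]; exact (hqcomm y₁ hy₁mem).1
    have hcu₂ : q.2 * LinearMap.mulLeft ℝ u₂ = LinearMap.mulLeft ℝ u₂ * q.2 := by
      rw [← hxu₂]; exact (hqcomm xa hxm).2
    have hcv₂ : q.2 * LinearMap.mulLeft ℝ v₂ = LinearMap.mulLeft ℝ v₂ * q.2 := by
      rw [← hy₂2]; exact (hqcomm y₂ hy₂mem).2
    obtain ⟨s₁, hs₁⟩ := commutant hsk1 hK1 hu₁0 hv₁0 hv₁orth hu₁ne hv₁ne hcu₁ hcv₁
    obtain ⟨s₂, hs₂⟩ := commutant hsk2 hK2 hu₂0 hv₂0 hv₂orth hu₂ne hv₂ne hcu₂ hcv₂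
    refine ⟨s₁, s₂, ?_⟩
    apply Prod.ext
    · show q.1 = (s₁ • (Kop, (0:Module.End ℝ (Quaternion ℝ))) + s₂ • ((0:Module.End ℝ (Quaternion ℝ)), Kop)).1
      simp [hs₁]
    · show q.2 = (s₁ • (Kop, (0:Module.End ℝ (Quaternion ℝ))) + s₂ • ((0:Module.End ℝ (Quaternion ℝ)), Kop)).2
      simp [hs₂]
  · intro q q' hq hq'
    obtain ⟨hsk1, hsk2, hK1, hK2⟩ := hq.1
    obtain ⟨hsk1', hsk2', hK1', hK2'⟩ := hq'.1
    have hcu₁ : q.1 * LinearMap.mulLeft ℝ u₁ = LinearMap.mulLeft ℝ u₁ * q.1 := by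
      rw [← hxu₁]; exact (hq.2 xa hxm).1
    have hcv₁ : q.1 * LinearMap.mulLeft ℝ v₁ = LinearMap.mulLeft ℝ v₁ * q.1 := by
      rw [← hy₁1]; exact (hq.2 y₁ hy₁mem).1
    have hcu₂ : q.2 * LinearMap.mulLeft ℝ u₂ = LinearMap.mulLeft ℝ u₂ * q.2 := by
      rw [← hxu₂]; exact (hq.2 xa hxm).2
    have hcv₂ : q.2 * LinearMap.mulLeft ℝ v₂ = LinearMap.mulLeft ℝ v₂ * q.2 := by
      rw [← hy₂2]; exact (hq.2 y₂ hy₂mem).2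
    have hcu₁' : q'.1 * LinearMap.mulLeft ℝ u₁ = LinearMap.mulLeft ℝ u₁ * q'.1 := by
      rw [← hxu₁]; exact (hq'.2 xa hxm).1
    have hcv₁' : q'.1 * LinearMap.mulLeft ℝ v₁ = LinearMap.mulLeft ℝ v₁ * q'.1 := by
      rw [← hy₁1]; exact (hq'.2 y₁ hy₁mem).1
    have hcu₂' : q'.2 * LinearMap.mulLeft ℝ u₂ = LinearMap.mulLeft ℝ u₂ * q'.2 := by
      rw [← hxu₂]; exact (hq'.2 xa hxm).2
    have hcv₂' : q'.2 * LinearMap.mulLeft ℝ v₂ = LinearMap.mulLeft ℝ v₂ * q'.2 := by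
      rw [← hy₂2]; exact (hq'.2 y₂ hy₂mem).2
    obtain ⟨s₁, hs₁⟩ := commutant hsk1 hK1 hu₁0 hv₁0 hv₁orth hu₁ne hv₁ne hcu₁ hcv₁
    obtain ⟨s₂, hs₂⟩ := commutant hsk2 hK2 hu₂0 hv₂0 hv₂orth hu₂ne hv₂ne hcu₂ hcv₂
    obtain ⟨t₁, ht₁⟩ := commutant hsk1' hK1' hu₁0 hv₁0 hv₁orth hu₁ne hv₁ne hcu₁' hcv₁'
    obtain ⟨t₂, ht₂⟩ := commutant hsk2' hK2' hu₂0 hv₂0 hv₂orth hu₂ne hv₂ne hcu₂' hcv₂'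
    constructor
    · rw [hs₁, ht₁, smul_mul_assoc, smul_mul_assoc, mul_smul_comm, mul_smul_comm,
        smul_smul, smul_smul, mul_comm s₁ t₁]
    · rw [hs₂, ht₂, smul_mul_assoc, smul_mul_assoc, mul_smul_comm, mul_smul_comm,
        smul_smul, smul_smul, mul_comm s₂ t₂]
end

section
/- Let V ⊆ so(𝔞) be a subspace such that for all J₁, J₂ ∈ V and all X ∈ 𝔞 there exist N₁, N₂ in the centralizer 𝒞(V) of V in so(𝔞) with J₁X = N₁X and J₂X = N₂X. Then [J₁, J₂]X = [N₂, N₁]X; consequently for every element J of V + [V,V] and every X ∈ 𝔞 there is N ∈ 𝒞(V + [V,V]) = 𝒞(V) with JX = NX. -/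
private lemma comm_mul_sub {R : Type*} [Ring R] {n a b : R}
    (ha : n * a = a * n) (hb : n * b = b * n) :
    n * (a * b - b * a) = (a * b - b * a) * n := by
  have h1 : n * (a * b) = (a * b) * n := by rw [← mul_assoc, ha, mul_assoc, hb, ← mul_assoc]
  have h2 : n * (b * a) = (b * a) * n := by rw [← mul_assoc, hb, mul_assoc, ha, ← mul_assoc]
  rw [mul_sub, sub_mul, h1, h2]

/-- If every `J ∈ V` satisfies the centralizer-type GO condition (for each `X` there is a
skew-symmetric `N` commuting with `V` with `J X = N X`), then `[J₁, J₂] X = [N₂, N₁] X`,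
and consequently every element of `V + [V, V]` satisfies the GO condition with `N` in the
centralizer of `V + [V, V]`. -/
theorem stmt16 {E : Type*} [NormedAddCommGroup E] [InnerProductSpace ℝ E]
    (V : Submodule ℝ (Module.End ℝ E))
    (hskew : ∀ J ∈ V, ∀ x y : E, (inner ℝ (J x) y : ℝ) = - inner ℝ x (J y))
    (hGO : ∀ J ∈ V, ∀ X : E, ∃ N : Module.End ℝ E,
      (∀ x y : E, (inner ℝ (N x) y : ℝ) = - inner ℝ x (N y)) ∧
      (∀ J' ∈ V, N * J' = J' * N) ∧ J X = N X) :
    (∀ J₁ ∈ V, ∀ J₂ ∈ V, ∀ X : E, ∀ N₁ N₂ : Module.End ℝ E,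
      ((∀ J' ∈ V, N₁ * J' = J' * N₁) ∧ J₁ X = N₁ X) →
      ((∀ J' ∈ V, N₂ * J' = J' * N₂) ∧ J₂ X = N₂ X) →
      ⁅J₁, J₂⁆ X = ⁅N₂, N₁⁆ X) ∧
    (∀ J ∈ V ⊔ Submodule.span ℝ
        {B : Module.End ℝ E | ∃ J₁ ∈ V, ∃ J₂ ∈ V, B = ⁅J₁, J₂⁆}, ∀ X : E,
      ∃ N : Module.End ℝ E,
        (∀ x y : E, (inner ℝ (N x) y : ℝ) = - inner ℝ x (N y)) ∧
        (∀ J' ∈ V ⊔ Submodule.span ℝ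
            {B : Module.End ℝ E | ∃ J₁ ∈ V, ∃ J₂ ∈ V, B = ⁅J₁, J₂⁆},
          N * J' = J' * N) ∧
        J X = N X) := by
  -- Part 1
  have part1 : ∀ J₁ ∈ V, ∀ J₂ ∈ V, ∀ X : E, ∀ N₁ N₂ : Module.End ℝ E,
      ((∀ J' ∈ V, N₁ * J' = J' * N₁) ∧ J₁ X = N₁ X) →
      ((∀ J' ∈ V, N₂ * J' = J' * N₂) ∧ J₂ X = N₂ X) →
      ⁅J₁, J₂⁆ X = ⁅N₂, N₁⁆ X := by
    rintro J₁ hJ₁ J₂ hJ₂ X N₁ N₂ ⟨hc₁, he₁⟩ ⟨hc₂, he₂⟩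
    have c12 := congrArg (fun f : Module.End ℝ E => f X) (hc₁ J₂ hJ₂)
    have c21 := congrArg (fun f : Module.End ℝ E => f X) (hc₂ J₁ hJ₁)
    simp only [Module.End.mul_apply] at c12 c21
    have e1 : J₁ (J₂ X) = N₂ (N₁ X) := by rw [he₂, ← c21, he₁]
    have e2 : J₂ (J₁ X) = N₁ (N₂ X) := by rw [he₁, ← c12, he₂]
    simp only [Ring.lie_def, LinearMap.sub_apply, Module.End.mul_apply]
    rw [e1, e2]
  refine ⟨part1, ?_⟩
  set S : Set (Module.End ℝ E) := {B : Module.End ℝ E | ∃ J₁ ∈ V, ∃ J₂ ∈ V, B = ⁅J₁, J₂⁆}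
    with hS
  set W := V ⊔ Submodule.span ℝ S with hW
  -- any N commuting with V commutes with W
  have commW : ∀ N : Module.End ℝ E, (∀ J' ∈ V, N * J' = J' * N) →
      ∀ J' ∈ W, N * J' = J' * N := by
    intro N hN J' hJ'
    rw [hW, Submodule.mem_sup] at hJ'
    obtain ⟨y, hy, z, hz, rfl⟩ := hJ'
    have hzcomm : N * z = z * N := by
      refine Submodule.span_induction ?_ ?_ ?_ ?_ hz
      · rintro B ⟨J₁, hJ₁, J₂, hJ₂, rfl⟩
        simpa only [Ring.lie_def] using comm_mul_sub (hN J₁ hJ₁) (hN J₂ hJ₂)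
      · simp
      · intro a b _ _ ha hb
        simp [mul_add, add_mul, ha, hb]
      · intro r a _ ha
        simp only [Algebra.mul_smul_comm, Algebra.smul_mul_assoc, ha]
    have hycomm := hN y hy
    simp [mul_add, add_mul, hycomm, hzcomm]
  -- the set of "good" N's
  have goodJ : ∀ J ∈ W, ∀ X : E, ∃ N : Module.End ℝ E,
      (∀ x y : E, (inner ℝ (N x) y : ℝ) = - inner ℝ x (N y)) ∧
      (∀ J' ∈ V, N * J' = J' * N) ∧ J X = N X := by
    intro J hJ X
    rw [hW, Submodule.mem_sup] at hJ
    obtain ⟨y, hy, z, hz, rfl⟩ := hJ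
    obtain ⟨N₀, hN₀skew, hN₀comm, hN₀eq⟩ := hGO y hy X
    have hzgood : ∃ N : Module.End ℝ E,
        (∀ x y : E, (inner ℝ (N x) y : ℝ) = - inner ℝ x (N y)) ∧
        (∀ J' ∈ V, N * J' = J' * N) ∧ z X = N X := by
      refine Submodule.span_induction ?_ ?_ ?_ ?_ hz
      · rintro B ⟨J₁, hJ₁, J₂, hJ₂, rfl⟩
        obtain ⟨N₁, hN₁skew, hN₁comm, hN₁eq⟩ := hGO J₁ hJ₁ X
        obtain ⟨N₂, hN₂skew, hN₂comm, hN₂eq⟩ := hGO J₂ hJ₂ X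
        refine ⟨⁅N₂, N₁⁆, ?_, ?_, ?_⟩
        · intro x y
          simp only [Ring.lie_def, LinearMap.sub_apply, Module.End.mul_apply,
            inner_sub_left, inner_sub_right]
          rw [hN₂skew (N₁ x) y, hN₁skew x (N₂ y), hN₁skew (N₂ x) y, hN₂skew x (N₁ y)]
          ring
        · intro J' hJ'
          simpa only [Ring.lie_def] using
            (comm_mul_sub (hN₂comm J' hJ').symm (hN₁comm J' hJ').symm).symm
        · exact part1 J₁ hJ₁ J₂ hJ₂ X N₁ N₂ ⟨hN₁comm, hN₁eq⟩ ⟨hN₂comm, hN₂eq⟩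
      · exact ⟨0, by simp, by simp, by simp⟩
      · rintro a b _ _ ⟨Na, hNas, hNac, hNae⟩ ⟨Nb, hNbs, hNbc, hNbe⟩
        refine ⟨Na + Nb, ?_, ?_, ?_⟩
        · intro x y
          simp [inner_add_left, inner_add_right, hNas, hNbs]
          ring
        · intro J' hJ'
          simp [mul_add, add_mul, hNac J' hJ', hNbc J' hJ']
        · simp [hNae, hNbe]
      · rintro r a _ ⟨Na, hNas, hNac, hNae⟩
        refine ⟨r • Na, ?_, ?_, ?_⟩
        · intro x y
          simp [inner_smul_left, inner_smul_right, hNas]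
        · intro J' hJ'
          simp [Algebra.mul_smul_comm, Algebra.smul_mul_assoc, hNac J' hJ']
        · simp [hNae]
    obtain ⟨Nz, hNzs, hNzc, hNze⟩ := hzgood
    refine ⟨N₀ + Nz, ?_, ?_, ?_⟩
    · intro x y
      simp [inner_add_left, inner_add_right, hN₀skew, hNzs]
      ring
    · intro J' hJ'
      simp [mul_add, add_mul, hN₀comm J' hJ', hNzc J' hJ']
    · simp [hN₀eq, hNze]
  intro J hJ X
  obtain ⟨N, hNs, hNc, hNe⟩ := goodJ J hJ X
  exact ⟨N, hNs, commW N hNc, hNe⟩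
end

section
/- Suppose V ⊆ so(𝔞) is a non-singular subspace (every nonzero element invertible), 𝔞 is V-irreducible, and N ∈ so(𝔞) normalizes V (i.e., [N, V] ⊆ V) with N ∉ 𝒞(V), where every nonzero element of 𝒞(V) squares to a negative multiple of the identity. Then dim Ker N ≤ (1/2) dim 𝔞. -/
/-- If `V ⊆ so(𝔞)` is non-singular, `𝔞` is `V`-irreducible, and `N ∈ so(𝔞)` normalizes
`V` without centralizing it (every nonzero element of the centralizer of `V` squaring to
a negative multiple of the identity), then `dim Ker N ≤ (1/2) dim 𝔞`. -/
theorem stmt19 {E : Type*} [NormedAddCommGroup E] [InnerProductSpace ℝ E]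
    [FiniteDimensional ℝ E]
    (V : Submodule ℝ (Module.End ℝ E))
    (hskew : ∀ J ∈ V, ∀ x y : E, (inner ℝ (J x) y : ℝ) = - inner ℝ x (J y))
    (hns : ∀ J ∈ V, J ≠ 0 → Function.Bijective J)
    (hirr : ∀ L : Submodule ℝ E, (∀ J ∈ V, ∀ x ∈ L, J x ∈ L) → L = ⊥ ∨ L = ⊤)
    (N : Module.End ℝ E)
    (hNskew : ∀ x y : E, (inner ℝ (N x) y : ℝ) = - inner ℝ x (N y))
    (hNnorm : ∀ J ∈ V, ⁅N, J⁆ ∈ V)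
    (hNc : ∃ J ∈ V, ⁅N, J⁆ ≠ 0)
    (hCsq : ∀ A : Module.End ℝ E, (∀ x y : E, (inner ℝ (A x) y : ℝ) = - inner ℝ x (A y)) →
      (∀ J ∈ V, ⁅A, J⁆ = 0) → A ≠ 0 →
      ∃ c : ℝ, c < 0 ∧ A * A = c • (1 : Module.End ℝ E)) :
    2 * Module.finrank ℝ (LinearMap.ker N) ≤ Module.finrank ℝ E := by
  by_contra hlt
  push_neg at hlt
  obtain ⟨J, hJV, hJne⟩ := hNc
  have hJ0 : J ≠ 0 := by rintro rfl; simp [Ring.lie_def] at hJne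
  have hJbij : Function.Bijective J := hns J hJV hJ0
  have hBbij : Function.Bijective (⁅N, J⁆ : Module.End ℝ E) := hns _ (hNnorm J hJV) hJne
  set K := LinearMap.ker N with hK
  set e := LinearEquiv.ofBijective J hJbij with he
  have hcomap : K.comap J = K.map (e.symm : E →ₗ[ℝ] E) := Submodule.comap_equiv_eq_map_symm e K
  have hdim' : Module.finrank ℝ (K.comap J) = Module.finrank ℝ K := by
    rw [hcomap]
    exact LinearEquiv.finrank_map_eq e.symm K
  have hsum := Submodule.finrank_sup_add_finrank_inf_eq K (K.comap J)
  have hsup : Module.finrank ℝ ↥(K ⊔ K.comap J) ≤ Module.finrank ℝ E :=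
    Submodule.finrank_le _
  have hpos : 0 < Module.finrank ℝ ↥(K ⊓ K.comap J) := by omega
  have hnb : K ⊓ K.comap J ≠ ⊥ := by
    intro h
    rw [h, finrank_bot] at hpos
    exact lt_irrefl 0 hpos
  obtain ⟨x, hx, hx0⟩ := Submodule.exists_mem_ne_zero_of_ne_bot hnb
  have hxK : N x = 0 := (LinearMap.mem_ker).mp hx.1
  have hxJ : N (J x) = 0 := (LinearMap.mem_ker).mp hx.2
  have hBx : ⁅N, J⁆ x = 0 := by
    have : ⁅N, J⁆ x = N (J x) - J (N x) := rfl
    rw [this, hxK, hxJ, map_zero, sub_zero]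
  exact hx0 (hBbij.injective (by rw [hBx, map_zero]))
end
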